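/- arXiv:2401.04951 — 4 statements merged into one kernel-verified Lean document; each statement's English description precedes it below -/
import Mathlib

section
/- Let T ∈ G be hyperbolic with light-like eigenvectors v₁ = (y₁,1) and v₂ = (y₂,1), and let M = span{v₁, v₂}. Then every S ∈ G with S ∘ T = T ∘ S satisfies: S(ℂ·v₁) = ℂ·v₁, S(ℂ·v₂) = ℂ·v₂, S(M^†) = M^†, the scalars α, β with S(v₁) = α·v₁ and S(v₂) = β·v₂ satisfy α·conj(β) = 1, and S restricted to M^† is a bijective A-preserving operator of M^† (a unitary of the Hilbert space (M^†, A)) commuting with T|_{M^†}. Conversely, for every α ∈ ℂ with α ≠ 0 and every bounded bijective A-preserving operator V of M^† commuting with T|_{M^†}, the linear map S defined by S(v₁) = α·v₁, S(v₂) = (1/conj(α))·v₂ and S = V on M^† belongs to G and commutes with T. -/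
noncomputable section

variable {H : Type*} [NormedAddCommGroup H] [InnerProductSpace ℂ H] [CompleteSpace H]

/-- The Hermitian form `A((x,z),(y,w)) = ⟨x,y⟩ - z·conj w` on `H ⊕ ℂ`, linear in the
first argument (the paper's convention); `⟨x,y⟩` (linear in `x`) is `inner y x` in Mathlib. -/
def formA (u v : H × ℂ) : ℂ :=
  (inner ℂ v.1 u.1 : ℂ) - u.2 * (starRingEnd ℂ) v.2

/-- The standard inner product of the Hilbert space `H ⊕ ℂ`, linear in the first argument. -/
def ipStd (u v : H × ℂ) : ℂ :=
  (inner ℂ v.1 u.1 : ℂ) + u.2 * (starRingEnd ℂ) v.2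

/-- Membership in the group `G` of bounded bijective linear maps preserving `A`. -/
def memG (T : (H × ℂ) →L[ℂ] (H × ℂ)) : Prop :=
  Function.Bijective T ∧ ∀ u v : H × ℂ, formA (T u) (T v) = formA u v

/-- `T` is elliptic: it has an eigenvector `(x,1)` with `‖x‖ < 1`. -/
def IsEllipticG (T : (H × ℂ) →L[ℂ] (H × ℂ)) : Prop :=
  ∃ x : H, ‖x‖ < 1 ∧ ∃ μ : ℂ, T (x, 1) = μ • ((x, 1) : H × ℂ)

/-- Points `x` of the closed unit ball with `(x,1)` an eigenvector of `T`. -/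
def fixedBall (T : (H × ℂ) →L[ℂ] (H × ℂ)) : Set H :=
  {x : H | ‖x‖ ≤ 1 ∧ ∃ μ : ℂ, T (x, 1) = μ • ((x, 1) : H × ℂ)}

/-- `T` is hyperbolic: not elliptic, with exactly two fixed points in the closed ball. -/
def IsHyperbolicG (T : (H × ℂ) →L[ℂ] (H × ℂ)) : Prop :=
  ¬ IsEllipticG T ∧ ∃ x y : H, x ≠ y ∧ fixedBall T = {x, y}

/-- `T` is parabolic: not elliptic, with exactly one fixed point in the closed ball. -/
def IsParabolicG (T : (H × ℂ) →L[ℂ] (H × ℂ)) : Prop :=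
  ¬ IsEllipticG T ∧ ∃ x : H, fixedBall T = {x}

/-- `M†`, the `A`-orthogonal complement of a subspace `M` of `H ⊕ ℂ`. -/
def daggerA (M : Submodule ℂ (H × ℂ)) : Submodule ℂ (H × ℂ) where
  carrier := {v | ∀ m ∈ M, formA v m = 0}
  add_mem' := by
    intro a b ha hb m hm
    have h1 := ha m hm
    have h2 := hb m hm
    simp only [formA, Prod.fst_add, Prod.snd_add, inner_add_right, add_mul] at *
    linear_combination h1 + h2
  zero_mem' := by
    intro m hm
    simp [formA]
  smul_mem' := by
    intro c a ha m hm
    have h1 := ha m hm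
    simp only [formA, Prod.smul_fst, Prod.smul_snd, inner_smul_right, smul_eq_mul] at *
    linear_combination c * h1

/-- The norm induced by `A` on a subspace where `A` is positive. -/
def nA (v : H × ℂ) : ℝ := Real.sqrt (formA v v).re

/-- Sequential completeness of a subspace for the norm induced by `A`. -/
def CompleteForA (M : Submodule ℂ (H × ℂ)) : Prop :=
  ∀ f : ℕ → H × ℂ, (∀ n, f n ∈ M) →
    (∀ ε : ℝ, 0 < ε → ∃ N : ℕ, ∀ m n : ℕ, N ≤ m → N ≤ n → nA (f m - f n) < ε) →
    ∃ v ∈ M, ∀ ε : ℝ, 0 < ε → ∃ N : ℕ, ∀ n : ℕ, N ≤ n → nA (f n - v) < ε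

end

/-! Write `v₁ = (y₁,1)` and `v₂ = (y₂,1)`. An `S` commuting with `T` maps eigenvectors of `T` to
eigenvectors for the same eigenvalue, and an element of `G` maps light-like vectors to light-like
vectors, i.e. to multiples of some `(z,1)` with `‖z‖ = 1`. The eigenvalues of `v₁` and `v₂` differ,
since otherwise `((y₁ + y₂)/2, 1)` would be an eigenvector inside the open ball; hence `S` preserves
both lines `ℂ vᵢ`, then `M†` because it preserves `A`, and `A(v₁,v₂) ≠ 0` forces `α·conj β = 1`.

Conversely, since `v₁, v₂` are isotropic with `A(v₁,v₂) ≠ 0`, `H ⊕ ℂ = ℂ v₁ ⊕ ℂ v₂ ⊕ M†` with the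
continuous coordinates `v ↦ A(v,v₂)/A(v₁,v₂)` and `v ↦ A(v,v₁)/A(v₂,v₁)`. Prescribing `S` on the
three summands gives a bounded operator preserving `A`; it is surjective by construction and hence
bijective, as `A` is nondegenerate. -/

section FormA

variable {H : Type*} [NormedAddCommGroup H] [InnerProductSpace ℂ H]

lemma formA_add_left (u u' v : H × ℂ) : formA (u + u') v = formA u v + formA u' v := by
  simp only [formA, Prod.fst_add, Prod.snd_add, inner_add_right]; ring

lemma formA_add_right (u v v' : H × ℂ) : formA u (v + v') = formA u v + formA u v' := by
  simp only [formA, Prod.fst_add, Prod.snd_add, inner_add_left, map_add]; ring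

lemma formA_smul_left (c : ℂ) (u v : H × ℂ) : formA (c • u) v = c * formA u v := by
  simp only [formA, Prod.smul_fst, Prod.smul_snd, inner_smul_right, smul_eq_mul]; ring

lemma formA_smul_right (c : ℂ) (u v : H × ℂ) :
    formA u (c • v) = starRingEnd ℂ c * formA u v := by
  simp only [formA, Prod.smul_fst, Prod.smul_snd, inner_smul_left, smul_eq_mul, map_mul]; ring

lemma formA_sub_left (u u' v : H × ℂ) : formA (u - u') v = formA u v - formA u' v := by
  simp only [formA, Prod.fst_sub, Prod.snd_sub, inner_sub_right]; ring

lemma formA_conj_symm (u v : H × ℂ) : starRingEnd ℂ (formA v u) = formA u v := by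
  simp only [formA, map_sub, map_mul, inner_conj_symm, Complex.conj_conj]; ring

noncomputable def formACLM (m : H × ℂ) : (H × ℂ) →L[ℂ] ℂ :=
  (innerSL ℂ m.1).comp (ContinuousLinearMap.fst ℂ H ℂ)
    - starRingEnd ℂ m.2 • ContinuousLinearMap.snd ℂ H ℂ

@[simp]
lemma formACLM_apply (m v : H × ℂ) : formACLM m v = formA v m := by
  simp [formACLM, formA]; ring

lemma eq_zero_of_forall_formA_eq_zero {u : H × ℂ} (h : ∀ v, formA u v = 0) : u = 0 := by
  have h₁ : (inner ℂ u.1 u.1 : ℂ) = 0 := by simpa [formA] using h (u.1, 0)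
  have h₂ : u.2 = 0 := by simpa [formA] using h (0, 1)
  exact Prod.ext (inner_self_eq_zero.1 h₁) h₂

lemma formA_fst_one_self (y : H) :
    formA ((y, 1) : H × ℂ) (y, 1) = ((‖y‖ ^ 2 - 1 : ℝ) : ℂ) := by
  simp [formA, inner_self_eq_norm_sq_to_K]

lemma norm_eq_one_of_formA_self_eq_zero {y : H} (h : formA ((y, 1) : H × ℂ) (y, 1) = 0) :
    ‖y‖ = 1 := by
  rw [formA_fst_one_self, Complex.ofReal_eq_zero, sub_eq_zero] at h
  exact (pow_eq_one_iff_of_nonneg (norm_nonneg y) two_ne_zero).1 h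

lemma formA_fst_one_ne_zero {y₁ y₂ : H} (h₁ : ‖y₁‖ = 1) (h₂ : ‖y₂‖ = 1) (hne : y₁ ≠ y₂) :
    formA ((y₁, 1) : H × ℂ) (y₂, 1) ≠ 0 := by
  intro h
  have h' : (inner ℂ y₂ y₁ : ℂ) = 1 := by
    simp only [formA, mul_one, map_one] at h; exact sub_eq_zero.1 h
  exact hne ((inner_eq_one_iff_of_norm_eq_one h₂ h₁).1 h').symm

lemma exists_eq_smul_fst_one_of_formA_self_eq_zero {u : H × ℂ} (hu : formA u u = 0)
    (hu₀ : u ≠ 0) : ∃ (γ : ℂ) (z : H), γ ≠ 0 ∧ ‖z‖ = 1 ∧ u = γ • ((z, 1) : H × ℂ) := by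
  have hnorm : ‖u.1‖ = ‖u.2‖ := by
    have h := congrArg Complex.re hu
    simp only [formA, inner_self_eq_norm_sq_to_K, Complex.mul_conj, Complex.sub_re,
      Complex.normSq_eq_norm_sq] at h
    exact (pow_left_inj₀ (norm_nonneg _) (norm_nonneg _) two_ne_zero).1
      (by exact_mod_cast sub_eq_zero.1 h)
  have h₂ : u.2 ≠ 0 := by
    intro h₂
    rw [h₂, norm_zero, norm_eq_zero] at hnorm
    exact hu₀ (Prod.ext hnorm h₂)
  refine ⟨u.2, u.2⁻¹ • u.1, h₂, ?_, ?_⟩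
  · rw [norm_smul, norm_inv, hnorm, inv_mul_cancel₀ (norm_ne_zero_iff.2 h₂)]
  · ext <;> simp [smul_smul, mul_inv_cancel₀ h₂]

lemma mem_daggerA_span_pair {a b v : H × ℂ} :
    v ∈ daggerA (Submodule.span ℂ {a, b}) ↔ formA v a = 0 ∧ formA v b = 0 := by
  refine ⟨fun h => ⟨h a (Submodule.subset_span (by simp)),
    h b (Submodule.subset_span (by simp))⟩, fun ⟨ha, hb⟩ m hm => ?_⟩
  induction hm using Submodule.span_induction with
  | mem x hx => rcases hx with rfl | rfl <;> assumption
  | zero => simp [formA]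
  | add x y _ _ hx hy => rw [formA_add_right, hx, hy, add_zero]
  | smul c x _ hx => rw [formA_smul_right, hx, mul_zero]

end FormA

section GroupG

variable {H : Type*} [NormedAddCommGroup H] [InnerProductSpace ℂ H]

lemma memG_of_surjective {T : (H × ℂ) →L[ℂ] (H × ℂ)} (hsurj : Function.Surjective T)
    (hT : ∀ u v, formA (T u) (T v) = formA u v) : memG T := by
  refine ⟨⟨(injective_iff_map_eq_zero T).2 fun u hu => ?_, hsurj⟩, hT⟩
  refine eq_zero_of_forall_formA_eq_zero fun v => ?_
  rw [← hT u v, hu]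
  simp [formA]

lemma eigenvalue_ne_zero_of_injective {T : (H × ℂ) →L[ℂ] (H × ℂ)}
    (hT : Function.Injective T) {v : H × ℂ} (hv : v ≠ 0) {μ : ℂ} (h : T v = μ • v) : μ ≠ 0 := by
  rintro rfl
  exact hv (hT (by rw [h, zero_smul, map_zero]))

lemma apply_mem_daggerA_span_pair_iff {T : (H × ℂ) →L[ℂ] (H × ℂ)}
    (hT : ∀ u v, formA (T u) (T v) = formA u v) {a b : H × ℂ} {μ ν : ℂ}
    (ha : T a = μ • a) (hb : T b = ν • b) (hμ : μ ≠ 0) (hν : ν ≠ 0) (v : H × ℂ) :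
    T v ∈ daggerA (Submodule.span ℂ {a, b}) ↔ v ∈ daggerA (Submodule.span ℂ {a, b}) := by
  have key : ∀ {c : H × ℂ} {μ : ℂ}, T c = μ • c → μ ≠ 0 →
      (formA (T v) c = 0 ↔ formA v c = 0) := fun {c μ} hc hμ => by
    rw [← hT v c, hc, formA_smul_right, mul_eq_zero, map_eq_zero, or_iff_right hμ]
  rw [mem_daggerA_span_pair, mem_daggerA_span_pair, key ha hμ, key hb hν]

lemma IsHyperbolicG.fixedBall_eq {T : (H × ℂ) →L[ℂ] (H × ℂ)} (hT : IsHyperbolicG T)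
    {y₁ y₂ : H} (hne : y₁ ≠ y₂) (h₁ : y₁ ∈ fixedBall T) (h₂ : y₂ ∈ fixedBall T) :
    fixedBall T = {y₁, y₂} := by
  obtain ⟨x, y, -, hxy⟩ := hT.2
  rw [hxy] at h₁ h₂ ⊢
  rcases h₁ with rfl | rfl <;> rcases h₂ with rfl | rfl
  all_goals first | exact absurd rfl hne | exact Set.pair_comm _ _ | rfl

lemma mul_conj_eq_one_of_apply_eq_smul {S : (H × ℂ) →L[ℂ] (H × ℂ)}
    (hS : ∀ u v, formA (S u) (S v) = formA u v) {v₁ v₂ : H × ℂ} (hc : formA v₁ v₂ ≠ 0)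
    {α β : ℂ} (h₁ : S v₁ = α • v₁) (h₂ : S v₂ = β • v₂) : α * starRingEnd ℂ β = 1 := by
  have h := hS v₁ v₂
  rw [h₁, h₂, formA_smul_left, formA_smul_right] at h
  exact mul_right_cancel₀ hc (by linear_combination h)

lemma isEllipticG_of_eigenvalue_eq {T : (H × ℂ) →L[ℂ] (H × ℂ)} {y₁ y₂ : H} (hne : y₁ ≠ y₂)
    (h₁ : ‖y₁‖ = 1) (h₂ : ‖y₂‖ = 1) {μ : ℂ} (heig₁ : T (y₁, 1) = μ • ((y₁, 1) : H × ℂ))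
    (heig₂ : T (y₂, 1) = μ • ((y₂, 1) : H × ℂ)) : IsEllipticG T := by
  refine ⟨(2 : ℂ)⁻¹ • (y₁ + y₂), ?_, μ, ?_⟩
  · have hpar := parallelogram_law_with_norm ℂ y₁ y₂
    have hsub : 0 < ‖y₁ - y₂‖ := norm_pos_iff.2 (sub_ne_zero.2 hne)
    rw [norm_smul, norm_inv, Complex.norm_ofNat]
    nlinarith [norm_nonneg (y₁ + y₂)]
  · have hmid : (((2 : ℂ)⁻¹ • (y₁ + y₂), 1) : H × ℂ)
        = (2 : ℂ)⁻¹ • (((y₁, 1) : H × ℂ) + (y₂, 1)) := by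
      ext <;> norm_num
    rw [hmid, map_smul, map_add, heig₁, heig₂]
    module

lemma exists_apply_eq_smul_of_commute {T S : (H × ℂ) →L[ℂ] (H × ℂ)} {a b : H} {μa μb : ℂ}
    (hball : fixedBall T = {a, b}) (hμ : μa ≠ μb) (ha : T (a, 1) = μa • ((a, 1) : H × ℂ))
    (hb : T (b, 1) = μb • ((b, 1) : H × ℂ)) (hla : formA ((a, 1) : H × ℂ) (a, 1) = 0)
    (hS : memG S) (hST : ∀ v, S (T v) = T (S v)) : ∃ γ : ℂ, S (a, 1) = γ • ((a, 1) : H × ℂ) := by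
  have hlu : formA (S (a, 1)) (S (a, 1)) = 0 := by rw [hS.2]; exact hla
  have hu₀ : S (a, 1) ≠ 0 := by
    rw [ne_eq, map_eq_zero_iff S hS.1.1]; simp
  obtain ⟨γ, z, hγ, hz, hu⟩ := exists_eq_smul_fst_one_of_formA_self_eq_zero hlu hu₀
  have heig : T (z, 1) = μa • ((z, 1) : H × ℂ) := by
    apply smul_right_injective _ hγ
    dsimp only
    rw [← map_smul, ← hu, ← hST, ha, map_smul, hu, smul_comm]
  have hzball : z ∈ fixedBall T := ⟨hz.le, μa, heig⟩
  rw [hball] at hzball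
  rcases hzball with rfl | rfl
  · exact ⟨γ, hu⟩
  · have h := congrArg Prod.snd (hb.symm.trans heig)
    simp only [Prod.smul_snd, smul_eq_mul, mul_one] at h
    exact absurd h.symm hμ

end GroupG

section LightlikePair

variable {H : Type*} [NormedAddCommGroup H] [InnerProductSpace ℂ H]

structure IsLightlikePair (v₁ v₂ : H × ℂ) : Prop where
  formA_left : formA v₁ v₁ = 0
  formA_right : formA v₂ v₂ = 0
  formA_ne_zero : formA v₁ v₂ ≠ 0

/-- The `v₁`-coordinate in the decomposition `H ⊕ ℂ = ℂ v₁ ⊕ ℂ v₂ ⊕ span {v₁, v₂}†`. -/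
noncomputable def pairCoord (v₁ v₂ : H × ℂ) : (H × ℂ) →L[ℂ] ℂ :=
  (formA v₁ v₂)⁻¹ • formACLM v₂

lemma pairCoord_apply (v₁ v₂ v : H × ℂ) : pairCoord v₁ v₂ v = (formA v₁ v₂)⁻¹ * formA v v₂ := by
  simp [pairCoord]

lemma pairCoord_eq_zero_of_mem_daggerA {v₁ v₂ w : H × ℂ}
    (hw : w ∈ daggerA (Submodule.span ℂ {v₁, v₂})) :
    pairCoord v₁ v₂ w = 0 ∧ pairCoord v₂ v₁ w = 0 := by
  rw [mem_daggerA_span_pair] at hw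
  rw [pairCoord_apply, pairCoord_apply, hw.1, hw.2, mul_zero, mul_zero]
  exact ⟨rfl, rfl⟩

noncomputable def pairProj (v₁ v₂ : H × ℂ) : (H × ℂ) →L[ℂ] (H × ℂ) :=
  (pairCoord v₁ v₂).smulRight v₁ + (pairCoord v₂ v₁).smulRight v₂

lemma pairProj_apply (v₁ v₂ v : H × ℂ) :
    pairProj v₁ v₂ v = pairCoord v₁ v₂ v • v₁ + pairCoord v₂ v₁ v • v₂ := rfl

namespace IsLightlikePair

variable {v₁ v₂ : H × ℂ}

lemma symm (hv : IsLightlikePair v₁ v₂) : IsLightlikePair v₂ v₁ :=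
  ⟨hv.formA_right, hv.formA_left, by rw [← formA_conj_symm, map_ne_zero]; exact hv.formA_ne_zero⟩

lemma pairCoord_left (hv : IsLightlikePair v₁ v₂) : pairCoord v₁ v₂ v₁ = 1 := by
  rw [pairCoord_apply, inv_mul_cancel₀ hv.formA_ne_zero]

lemma pairCoord_right (hv : IsLightlikePair v₁ v₂) : pairCoord v₁ v₂ v₂ = 0 := by
  rw [pairCoord_apply, hv.formA_right, mul_zero]

lemma sub_pairProj_mem_daggerA (hv : IsLightlikePair v₁ v₂) (v : H × ℂ) :
    v - pairProj v₁ v₂ v ∈ daggerA (Submodule.span ℂ {v₁, v₂}) := by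
  have hc₁₂ := hv.formA_ne_zero
  have hc₂₁ := hv.symm.formA_ne_zero
  rw [mem_daggerA_span_pair, pairProj_apply, pairCoord_apply, pairCoord_apply]
  simp only [formA_sub_left, formA_add_left, formA_smul_left, hv.formA_left, hv.formA_right]
  constructor <;> field_simp <;> ring

/-- The projection onto `span {v₁, v₂}†` along `span {v₁, v₂}`. -/
noncomputable def toDagger (hv : IsLightlikePair v₁ v₂) :
    (H × ℂ) →L[ℂ] daggerA (Submodule.span ℂ {v₁, v₂}) :=
  (ContinuousLinearMap.id ℂ (H × ℂ) - pairProj v₁ v₂).codRestrict _ hv.sub_pairProj_mem_daggerA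

lemma coe_toDagger (hv : IsLightlikePair v₁ v₂) (v : H × ℂ) :
    (hv.toDagger v : H × ℂ) = v - pairProj v₁ v₂ v := rfl

lemma decomp (hv : IsLightlikePair v₁ v₂) (v : H × ℂ) :
    v = pairCoord v₁ v₂ v • v₁ + pairCoord v₂ v₁ v • v₂ + hv.toDagger v := by
  rw [coe_toDagger, pairProj_apply]; abel

lemma toDagger_left (hv : IsLightlikePair v₁ v₂) : hv.toDagger v₁ = 0 := by
  ext1
  rw [coe_toDagger, pairProj_apply, hv.pairCoord_left, hv.symm.pairCoord_right]
  simp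

lemma toDagger_right (hv : IsLightlikePair v₁ v₂) : hv.toDagger v₂ = 0 := by
  ext1
  rw [coe_toDagger, pairProj_apply, hv.pairCoord_right, hv.symm.pairCoord_left]
  simp

lemma toDagger_of_mem (hv : IsLightlikePair v₁ v₂) {w : H × ℂ}
    (hw : w ∈ daggerA (Submodule.span ℂ {v₁, v₂})) : hv.toDagger w = ⟨w, hw⟩ := by
  ext1
  rw [coe_toDagger, pairProj_apply, (pairCoord_eq_zero_of_mem_daggerA hw).1,
    (pairCoord_eq_zero_of_mem_daggerA hw).2]
  simp

lemma clm_ext {E : Type*} [AddCommGroup E] [Module ℂ E] [TopologicalSpace E]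
    (hv : IsLightlikePair v₁ v₂) {S S' : (H × ℂ) →L[ℂ] E} (h₁ : S v₁ = S' v₁) (h₂ : S v₂ = S' v₂)
    (hD : ∀ w ∈ daggerA (Submodule.span ℂ {v₁, v₂}), S w = S' w) : S = S' := by
  refine ContinuousLinearMap.ext fun v => ?_
  rw [hv.decomp v]
  simp only [map_add, map_smul, h₁, h₂, hD _ (hv.toDagger v).2]

lemma formA_add_add (hv : IsLightlikePair v₁ v₂) (p q p' q' : ℂ) {w w' : H × ℂ}
    (hw : w ∈ daggerA (Submodule.span ℂ {v₁, v₂}))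
    (hw' : w' ∈ daggerA (Submodule.span ℂ {v₁, v₂})) :
    formA (p • v₁ + q • v₂ + w) (p' • v₁ + q' • v₂ + w')
      = p * starRingEnd ℂ q' * formA v₁ v₂ + q * starRingEnd ℂ p' * formA v₂ v₁
        + formA w w' := by
  rw [mem_daggerA_span_pair] at hw hw'
  have h₁ : formA v₁ w' = 0 := by rw [← formA_conj_symm, hw'.1, map_zero]
  have h₂ : formA v₂ w' = 0 := by rw [← formA_conj_symm, hw'.2, map_zero]
  simp only [formA_add_left, formA_add_right, formA_smul_left, formA_smul_right,
    hv.formA_left, hv.formA_right, h₁, h₂, hw.1, hw.2]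
  ring

/-- The operator acting as `α` on `ℂ v₁`, as `β` on `ℂ v₂` and as `V` on `span {v₁, v₂}†`. -/
noncomputable def extend (hv : IsLightlikePair v₁ v₂) (α β : ℂ)
    (V : daggerA (Submodule.span ℂ {v₁, v₂}) →L[ℂ] daggerA (Submodule.span ℂ {v₁, v₂})) :
    (H × ℂ) →L[ℂ] (H × ℂ) :=
  α • (pairCoord v₁ v₂).smulRight v₁ + β • (pairCoord v₂ v₁).smulRight v₂
    + (daggerA (Submodule.span ℂ {v₁, v₂})).subtypeL ∘L V ∘L hv.toDagger

variable (hv : IsLightlikePair v₁ v₂) (α β : ℂ)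
  (V : daggerA (Submodule.span ℂ {v₁, v₂}) →L[ℂ] daggerA (Submodule.span ℂ {v₁, v₂}))

lemma extend_apply (v : H × ℂ) :
    hv.extend α β V v = (α * pairCoord v₁ v₂ v) • v₁ + (β * pairCoord v₂ v₁ v) • v₂
      + V (hv.toDagger v) := by
  simp [extend, smul_smul]

lemma extend_apply_left : hv.extend α β V v₁ = α • v₁ := by
  simp [extend_apply, hv.pairCoord_left, hv.symm.pairCoord_right, hv.toDagger_left]

lemma extend_apply_right : hv.extend α β V v₂ = β • v₂ := by
  simp [extend_apply, hv.pairCoord_right, hv.symm.pairCoord_left, hv.toDagger_right]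

lemma extend_apply_of_mem {w : H × ℂ} (hw : w ∈ daggerA (Submodule.span ℂ {v₁, v₂})) :
    hv.extend α β V w = V ⟨w, hw⟩ := by
  simp [extend_apply, pairCoord_eq_zero_of_mem_daggerA hw, hv.toDagger_of_mem hw]

lemma formA_extend (hαβ : α * starRingEnd ℂ β = 1)
    (hV : ∀ u w, formA (V u : H × ℂ) (V w : H × ℂ) = formA (u : H × ℂ) (w : H × ℂ)) (u v : H × ℂ) :
    formA (hv.extend α β V u) (hv.extend α β V v) = formA u v := by
  have hβα : β * starRingEnd ℂ α = 1 := by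
    simpa [mul_comm] using congrArg (starRingEnd ℂ) hαβ
  conv_rhs => rw [hv.decomp u, hv.decomp v]
  rw [extend_apply, extend_apply, hv.formA_add_add _ _ _ _ (V _).2 (V _).2,
    hv.formA_add_add _ _ _ _ (hv.toDagger u).2 (hv.toDagger v).2, hV]
  simp only [map_mul]
  linear_combination
    (pairCoord v₁ v₂ u * starRingEnd ℂ (pairCoord v₂ v₁ v) * formA v₁ v₂) * hαβ
      + (pairCoord v₂ v₁ u * starRingEnd ℂ (pairCoord v₁ v₂ v) * formA v₂ v₁) * hβα

lemma extend_surjective (hα : α ≠ 0) (hβ : β ≠ 0) (hV : Function.Surjective V) :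
    Function.Surjective (hv.extend α β V) := by
  intro u
  obtain ⟨w, hw⟩ := hV (hv.toDagger u)
  refine ⟨(pairCoord v₁ v₂ u / α) • v₁ + (pairCoord v₂ v₁ u / β) • v₂ + w, ?_⟩
  rw [map_add, map_add, map_smul, map_smul, extend_apply_left, extend_apply_right,
    extend_apply_of_mem hv α β V w.2, hw, smul_smul, smul_smul, div_mul_cancel₀ _ hα,
    div_mul_cancel₀ _ hβ]
  exact (hv.decomp u).symm

lemma memG_extend (hαβ : α * starRingEnd ℂ β = 1) (hV : Function.Surjective V)
    (hVA : ∀ u w, formA (V u : H × ℂ) (V w : H × ℂ) = formA (u : H × ℂ) (w : H × ℂ)) :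
    memG (hv.extend α β V) :=
  memG_of_surjective
    (hv.extend_surjective α β V (left_ne_zero_of_mul_eq_one hαβ)
      ((map_ne_zero _).1 (right_ne_zero_of_mul_eq_one hαβ)) hV)
    (hv.formA_extend α β V hαβ hVA)

lemma extend_comp_commute {T : (H × ℂ) →L[ℂ] (H × ℂ)} {μ₁ μ₂ : ℂ} (h₁ : T v₁ = μ₁ • v₁)
    (h₂ : T v₂ = μ₂ • v₂) (hTD : ∀ w ∈ daggerA (Submodule.span ℂ {v₁, v₂}),
      T w ∈ daggerA (Submodule.span ℂ {v₁, v₂}))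
    (hVT : ∀ u w : daggerA (Submodule.span ℂ {v₁, v₂}), T (u : H × ℂ) = w → T (V u : H × ℂ) = V w) :
    hv.extend α β V ∘L T = T ∘L hv.extend α β V := by
  refine hv.clm_ext ?_ ?_ fun w hw => ?_ <;> simp only [ContinuousLinearMap.comp_apply]
  · rw [h₁, map_smul, extend_apply_left, map_smul, h₁, smul_comm]
  · rw [h₂, map_smul, extend_apply_right, map_smul, h₂, smul_comm]
  · rw [extend_apply_of_mem hv α β V (hTD w hw), extend_apply_of_mem hv α β V hw]
    exact (hVT ⟨w, hw⟩ ⟨T w, hTD w hw⟩ rfl).symm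

end IsLightlikePair
end LightlikePair

section
variable {H : Type*} [NormedAddCommGroup H] [InnerProductSpace ℂ H] [CompleteSpace H]

/-- centralizer of a hyperbolic isometry: every commuting `S ∈ G`
preserves the two light-like eigenlines (with eigenvalues `α, β` satisfying
`α·conj β = 1`) and restricts to a unitary of `(M†, A)` commuting with `T|_{M†}`;
conversely every such pair of data yields a commuting element of `G`. -/
theorem centralizer_hyperbolic (T : (H × ℂ) →L[ℂ] (H × ℂ))
    (hT : memG T) (hhyp : IsHyperbolicG T)
    (y₁ y₂ : H) (hne : y₁ ≠ y₂)
    (hlight₁ : formA ((y₁, 1) : H × ℂ) ((y₁, 1) : H × ℂ) = 0)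
    (hlight₂ : formA ((y₂, 1) : H × ℂ) ((y₂, 1) : H × ℂ) = 0)
    (μ₁ μ₂ : ℂ)
    (heig₁ : T (y₁, 1) = μ₁ • ((y₁, 1) : H × ℂ))
    (heig₂ : T (y₂, 1) = μ₂ • ((y₂, 1) : H × ℂ))
    (M : Submodule ℂ (H × ℂ))
    (hM : M = Submodule.span ℂ {((y₁, 1) : H × ℂ), ((y₂, 1) : H × ℂ)}) :
    -- every S ∈ G commuting with T preserves the eigenlines and M†
    (∀ S : (H × ℂ) →L[ℂ] (H × ℂ), memG S → S ∘L T = T ∘L S →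
      (∃ α β : ℂ,
        S (y₁, 1) = α • ((y₁, 1) : H × ℂ) ∧
        S (y₂, 1) = β • ((y₂, 1) : H × ℂ) ∧
        α * (starRingEnd ℂ) β = 1) ∧
      S '' (daggerA M : Set (H × ℂ)) = (daggerA M : Set (H × ℂ)) ∧
      Set.BijOn S (daggerA M : Set (H × ℂ)) (daggerA M : Set (H × ℂ)) ∧
      (∀ u ∈ daggerA M, ∀ w ∈ daggerA M, formA (S u) (S w) = formA u w) ∧
      (∀ v ∈ daggerA M, S (T v) = T (S v))) ∧
    -- conversely, each α ≠ 0 and each A-preserving bijection V of M† commuting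
    -- with T|_{M†} determine an element of G commuting with T
    (∀ (α : ℂ), α ≠ 0 → ∀ V : daggerA M →L[ℂ] daggerA M,
      Function.Bijective V →
      (∀ u w : daggerA M,
        formA (V u : H × ℂ) (V w : H × ℂ) = formA (u : H × ℂ) (w : H × ℂ)) →
      (∀ u w : daggerA M, T (u : H × ℂ) = (w : H × ℂ) →
        T (V u : H × ℂ) = (V w : H × ℂ)) →
      ∃ S : (H × ℂ) →L[ℂ] (H × ℂ), memG S ∧ S ∘L T = T ∘L S ∧
        S (y₁, 1) = α • ((y₁, 1) : H × ℂ) ∧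
        S (y₂, 1) = (1 / (starRingEnd ℂ) α) • ((y₂, 1) : H × ℂ) ∧
        ∀ w : daggerA M, S (w : H × ℂ) = (V w : H × ℂ)) := by
  have hn₁ := norm_eq_one_of_formA_self_eq_zero hlight₁
  have hn₂ := norm_eq_one_of_formA_self_eq_zero hlight₂
  have hv : IsLightlikePair ((y₁, 1) : H × ℂ) (y₂, 1) :=
    ⟨hlight₁, hlight₂, formA_fst_one_ne_zero hn₁ hn₂ hne⟩
  have hball := hhyp.fixedBall_eq hne ⟨hn₁.le, μ₁, heig₁⟩ ⟨hn₂.le, μ₂, heig₂⟩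
  have hμ : μ₁ ≠ μ₂ := fun h => hhyp.1 (isEllipticG_of_eigenvalue_eq hne hn₁ hn₂ heig₁ (h ▸ heig₂))
  refine ⟨fun S hS hST => ?_, fun α hα V hV hVA hVT => ?_⟩
  · have hST' (v : H × ℂ) : S (T v) = T (S v) := DFunLike.congr_fun hST v
    obtain ⟨α, hα⟩ := exists_apply_eq_smul_of_commute hball hμ heig₁ heig₂ hlight₁ hS hST'
    obtain ⟨β, hβ⟩ := exists_apply_eq_smul_of_commute (hball.trans (Set.pair_comm _ _)) hμ.symm
      heig₂ heig₁ hlight₂ hS hST'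
    have hαβ := mul_conj_eq_one_of_apply_eq_smul hS.2 hv.formA_ne_zero hα hβ
    have hpre : S ⁻¹' (daggerA M : Set (H × ℂ)) = daggerA M := hM ▸ Set.ext
      (apply_mem_daggerA_span_pair_iff hS.2 hα hβ (left_ne_zero_of_mul_eq_one hαβ)
        ((map_ne_zero _).1 (right_ne_zero_of_mul_eq_one hαβ)))
    have hbij := hpre ▸ hS.1.bijOn_preimage
    exact ⟨⟨α, β, hα, hβ, hαβ⟩, hbij.image_eq, hbij, fun u _ w _ => hS.2 u w, fun v _ => hST' v⟩
  · subst hM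
    have hTD := fun w => (apply_mem_daggerA_span_pair_iff hT.2 heig₁ heig₂
      (eigenvalue_ne_zero_of_injective hT.1.1 (by simp) heig₁)
      (eigenvalue_ne_zero_of_injective hT.1.1 (by simp) heig₂) w).2
    have hαβ : α * starRingEnd ℂ (1 / starRingEnd ℂ α) = 1 := by simp [hα]
    exact ⟨hv.extend α _ V, hv.memG_extend α _ V hαβ hV.2 hVA,
      hv.extend_comp_commute α _ V heig₁ heig₂ hTD hVT, hv.extend_apply_left α _ V,
      hv.extend_apply_right α _ V, fun w => hv.extend_apply_of_mem α _ V w.2⟩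

end
end

section
/- Let T, S ∈ G both be hyperbolic with S ∘ T = T ∘ S. Then T and S have the same boundary fixed points: {x ∈ H : ‖x‖ = 1 and (x,1) is an eigenvector of T} = {x ∈ H : ‖x‖ = 1 and (x,1) is an eigenvector of S}. -/
/-!
If `S` commutes with `T`, then `S` maps the eigenvector `(x, 1)` of `T` at a boundary fixed point
to an eigenvector of `T` with the same eigenvalue; since `S` preserves `A`, the image is again
`A`-null, hence zero or a multiple of some `(y, 1)` with `‖y‖ = 1`. If `y ≠ x`, then `(x, 1)` and
`(y, 1)` share an eigenvalue, so `T` fixes the midpoint `(x + y) / 2`, which lies in the open unit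
ball by strict convexity: `T` would be elliptic. Hence `y = x`, so every boundary fixed point of
a non-elliptic `T` is a boundary fixed point of every `S ∈ G` commuting with it.
-/

lemma norm_add_lt_two_of_ne (𝕜 : Type*) {E : Type*} [RCLike 𝕜] [NormedAddCommGroup E]
    [InnerProductSpace 𝕜 E] {p q : E} (hp : ‖p‖ ≤ 1) (hq : ‖q‖ ≤ 1) (hpq : p ≠ q) :
    ‖p + q‖ < 2 := by
  have hlaw := parallelogram_law_with_norm 𝕜 p q
  have hsub : 0 < ‖p - q‖ := norm_pos_iff.mpr (sub_ne_zero.mpr hpq)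
  nlinarith [norm_nonneg p, norm_nonneg q, norm_nonneg (p + q)]

section
variable {H : Type*} [NormedAddCommGroup H] [InnerProductSpace ℂ H]

lemma formA_self_re (x : H) (z : ℂ) :
    (formA ((x, z) : H × ℂ) (x, z)).re = ‖x‖ ^ 2 - ‖z‖ ^ 2 := by
  simp [formA, inner_self_eq_norm_sq_to_K, Complex.mul_conj, Complex.normSq_eq_norm_sq,
    ← Complex.ofReal_pow]

lemma exists_eq_smul_of_formA_self_re_eq_zero {w : H × ℂ} (hw : w ≠ 0)
    (hnull : (formA w w).re = 0) :
    ∃ c : ℂ, c ≠ 0 ∧ ∃ y : H, ‖y‖ = 1 ∧ w = c • ((y, 1) : H × ℂ) := by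
  obtain ⟨x, z⟩ := w
  rw [formA_self_re, sub_eq_zero] at hnull
  have hxz : ‖x‖ = ‖z‖ := (pow_left_inj₀ (norm_nonneg x) (norm_nonneg z) two_ne_zero).mp hnull
  have hz : z ≠ 0 := by
    rintro rfl
    exact hw (by simpa using hxz)
  refine ⟨z, hz, z⁻¹ • x, ?_, ?_⟩
  · rw [norm_smul, norm_inv, hxz, inv_mul_cancel₀ (norm_ne_zero_iff.mpr hz)]
  · ext <;> simp [smul_smul, hz]

lemma isEllipticG_of_same_eigenvalue {T : (H × ℂ) →L[ℂ] (H × ℂ)} {p q : H} {μ : ℂ}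
    (hp : ‖p‖ ≤ 1) (hq : ‖q‖ ≤ 1) (hpq : p ≠ q)
    (hTp : T (p, 1) = μ • ((p, 1) : H × ℂ)) (hTq : T (q, 1) = μ • ((q, 1) : H × ℂ)) :
    IsEllipticG T := by
  have hmid : (((2⁻¹ : ℂ) • (p + q), 1) : H × ℂ) = (2⁻¹ : ℂ) • (((p, 1) : H × ℂ) + (q, 1)) := by
    ext <;> norm_num
  refine ⟨(2⁻¹ : ℂ) • (p + q), ?_, μ, ?_⟩
  · rw [norm_smul, norm_inv, Complex.norm_two]
    linarith [norm_add_lt_two_of_ne ℂ hp hq hpq]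
  · rw [hmid, map_smul, map_add, hTp, hTq, ← smul_add, smul_comm]

lemma exists_eigenvalue_of_commute {T S : (H × ℂ) →L[ℂ] (H × ℂ)} (hT : ¬ IsEllipticG T)
    (hS : memG S) (hcomm : S ∘L T = T ∘L S) {x : H} (hx : ‖x‖ = 1) {μ : ℂ}
    (hμ : T (x, 1) = μ • ((x, 1) : H × ℂ)) :
    ∃ ν : ℂ, S (x, 1) = ν • ((x, 1) : H × ℂ) := by
  obtain ⟨w, hw⟩ : ∃ w, S ((x, 1) : H × ℂ) = w := ⟨_, rfl⟩
  rcases eq_or_ne w 0 with rfl | hw0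
  · exact ⟨0, by rw [hw, zero_smul]⟩
  have hTw : T w = μ • w := by
    rw [← hw, ← ContinuousLinearMap.comp_apply, ← hcomm, ContinuousLinearMap.comp_apply, hμ,
      map_smul]
  have hnull : (formA w w).re = 0 := by
    rw [← hw, hS.2, formA_self_re, hx]
    norm_num
  obtain ⟨c, hc, y, hy, rfl⟩ := exists_eq_smul_of_formA_self_re_eq_zero hw0 hnull
  have hTy : T (y, 1) = μ • ((y, 1) : H × ℂ) := by
    rw [map_smul, smul_comm] at hTw
    exact smul_right_injective _ hc hTw
  obtain rfl : y = x := by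
    by_contra hyx
    exact hT (isEllipticG_of_same_eigenvalue hy.le hx.le hyx hTy hμ)
  exact ⟨c, hw⟩

end

section
variable {H : Type*} [NormedAddCommGroup H] [InnerProductSpace ℂ H] [CompleteSpace H]

set_option linter.unusedSectionVars false

/-- two commuting hyperbolic isometries have the same boundary fixed
points. -/
theorem commuting_hyperbolic_same_fixed_points (T S : (H × ℂ) →L[ℂ] (H × ℂ))
    (hT : memG T) (hS : memG S)
    (hTh : IsHyperbolicG T) (hSh : IsHyperbolicG S)
    (hcomm : S ∘L T = T ∘L S) :
    {x : H | ‖x‖ = 1 ∧ ∃ μ : ℂ, T (x, 1) = μ • ((x, 1) : H × ℂ)}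
      = {x : H | ‖x‖ = 1 ∧ ∃ μ : ℂ, S (x, 1) = μ • ((x, 1) : H × ℂ)} := by
  ext x
  constructor
  · rintro ⟨hx, μ, hμ⟩
    exact ⟨hx, exists_eigenvalue_of_commute hTh.1 hS hcomm hx hμ⟩
  · rintro ⟨hx, μ, hμ⟩
    exact ⟨hx, exists_eigenvalue_of_commute hSh.1 hT hcomm.symm hx hμ⟩

end
end

section
/- Let T̂ = (λ, a', s) be a non-vertical Heisenberg translation (a' ≠ 0). Then an element Ŝ ∈ Ĝ commutes with T̂ if and only if there exist λ' ∈ ℂ with |λ'| = 1, a unitary operator U of the orthogonal complement (ℂ·e)^⊥ in H with U(a') = λ'·a', b' ∈ H orthogonal to e with ⟨b',a'⟩ ∈ ℝ, and t ∈ ℂ with Re t = (1/2)‖b'‖², such that Ŝ(x,z) = ((λ'·⟨x,e⟩ + ⟨x', U⁻¹(b')⟩ + λ'·t·z)·e + U(x') + λ'·z·b', λ'·z) for all (x,z) ∈ H ⊕ ℂ. -/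
noncomputable section

variable {H : Type*} [NormedAddCommGroup H] [InnerProductSpace ℂ H] [CompleteSpace H]

/-- The Hermitian form `Â((x,z),(y,w)) = -z·conj⟨y,e⟩ - ⟨x,e⟩·conj w + ⟨x',y'⟩`
(paper convention: linear in the first argument, with `⟨a,b⟩ = inner b a` in Mathlib,
and `x' = x - ⟨x,e⟩e`). -/
def hatA (e : H) (u v : H × ℂ) : ℂ :=
  - u.2 * (inner ℂ v.1 e : ℂ) - (inner ℂ e u.1 : ℂ) * (starRingEnd ℂ) v.2
    + (inner ℂ (v.1 - (inner ℂ e v.1 : ℂ) • e) (u.1 - (inner ℂ e u.1 : ℂ) • e) : ℂ)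

/-- Membership in the group `Ĝ` of bounded bijective linear maps preserving `Â`. -/
def memGhat (e : H) (T : (H × ℂ) →L[ℂ] (H × ℂ)) : Prop :=
  Function.Bijective T ∧ ∀ u v : H × ℂ, hatA e (T u) (T v) = hatA e u v

/-- `T` is the Heisenberg translation `(λ, a', s)`: an element of `Ĝ` sending
`(x,z)` to `λ·((⟨x,e⟩ + ⟨x',a'⟩ + s·z)·e + x' + z·a', z)`, where `|λ| = 1`,
`a' ⊥ e`, `s ≠ 0` and `Re s = ‖a'‖²/2`. -/
def IsHeisenberg (e : H) (T : (H × ℂ) →L[ℂ] (H × ℂ)) (lam : ℂ) (a' : H) (s : ℂ) :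
    Prop :=
  ‖lam‖ = 1 ∧ a' ∈ (ℂ ∙ e)ᗮ ∧ s ≠ 0 ∧ s.re = (1 / 2) * ‖a'‖ ^ 2 ∧
  memGhat e T ∧
  ∀ (x : H) (z : ℂ),
    T (x, z) = lam •
      (((((inner ℂ e x : ℂ) + (inner ℂ a' (x - (inner ℂ e x : ℂ) • e) : ℂ) + s * z) • e
          + (x - (inner ℂ e x : ℂ) • e) + z • a', z)) : H × ℂ)

/-- `K†`, the `Â`-orthogonal complement of a subspace `K` of `H ⊕ ℂ`. -/
def daggerHat (e : H) (K : Submodule ℂ (H × ℂ)) : Submodule ℂ (H × ℂ) where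
  carrier := {v | ∀ m ∈ K, hatA e v m = 0}
  add_mem' := by
    intro a b ha hb m hm
    have h1 := ha m hm
    have h2 := hb m hm
    simp only [hatA, Prod.fst_add, Prod.snd_add, inner_add_right, inner_sub_right,
      inner_smul_right, add_smul] at *
    ring_nf at *
    linear_combination h1 + h2
  zero_mem' := by
    intro m hm
    simp [hatA]
  smul_mem' := by
    intro c a ha m hm
    have h1 := ha m hm
    simp only [hatA, Prod.smul_fst, Prod.smul_snd, inner_smul_right, inner_sub_right,
      smul_eq_mul, smul_smul] at *
    ring_nf at *
    linear_combination c * h1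

end

section
variable {H : Type*} [NormedAddCommGroup H] [InnerProductSpace ℂ H] [CompleteSpace H]

/-- The component `x' = x - ⟨x,e⟩e` of `x`, as an element of `(ℂ·e)ᗮ`. -/
noncomputable def projPerp (e : H) (he : ‖e‖ = 1) (x : H) : ((ℂ ∙ e)ᗮ : Submodule ℂ H) :=
  ⟨x - (inner ℂ e x : ℂ) • e, by
    rw [Submodule.mem_orthogonal]
    intro u hu
    rcases Submodule.mem_span_singleton.1 hu with ⟨c, rfl⟩
    have h1 : (inner ℂ e e : ℂ) = 1 := by
      rw [inner_self_eq_norm_sq_to_K, he]; norm_num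
    simp [inner_smul_left, inner_sub_right, inner_smul_right, h1, he]
    ring⟩

end

/-!
Put `N = T̂ - λ`. Then `N² (x, z) = λ² ‖a'‖² z • (e, 0)`, so for `a' ≠ 0` the operator `N²` has
rank one with image `ℂ (e, 0)`. An `Ŝ` commuting with `T̂` commutes with `N²`, hence
`Ŝ (e, 0) = ρ (e, 0)` where `ρ` is the last coordinate of `Ŝ (0, 1)`, and `Â ((e, 0), (0, 1)) = -1`
forces `|ρ| = 1`.

An element of `Ĝ` with this property has the stabilizer form: pairing with `(e, 0)` shows that it
preserves `H ⊕ 0`, pairing `H ⊕ 0` with itself makes its compression `U` to `(ℂ e)ᗮ` unitary,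
pairing with `(0, 1)` gives the `e`-coefficient, and `b'`, `t` are read off `Ŝ (0, 1)`, an
`Â`-null vector.

For such an `Ŝ`, comparing `Ŝ T̂` with `T̂ Ŝ` leaves `U a' = ρ a'` and `⟨a', c'⟩ = ρ ⟨b', a'⟩`;
as `U` is unitary with `U c' = b'`, the latter says that `⟨b', a'⟩` is real.
-/

open scoped InnerProductSpace ComplexConjugate

section UnitVector

variable {H : Type*} [NormedAddCommGroup H] [InnerProductSpace ℂ H] {e : H}

theorem inner_smul_add_of_mem_orthogonal (he : ‖e‖ = 1) (μ : ℂ) {w : H}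
    (hw : w ∈ (ℂ ∙ e)ᗮ) : ⟪e, μ • e + w⟫_ℂ = μ := by
  rw [Submodule.mem_orthogonal_singleton_iff_inner_right] at hw
  simp [he, hw]

theorem smul_add_eq_smul_add_iff (he : ‖e‖ = 1) {μ ν : ℂ} {v w : (ℂ ∙ e)ᗮ} :
    μ • e + (v : H) = ν • e + (w : H) ↔ μ = ν ∧ v = w := by
  refine ⟨fun h => ?_, fun ⟨hμ, hvw⟩ => hμ ▸ hvw ▸ rfl⟩
  have hμ : μ = ν := by
    simpa [inner_smul_add_of_mem_orthogonal he _ v.2, inner_smul_add_of_mem_orthogonal he _ w.2]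
      using congrArg (⟪e, ·⟫_ℂ) h
  exact ⟨hμ, by simpa [hμ] using h⟩

theorem coe_orthogonalProjectionOnto_orthogonal_singleton (he : ‖e‖ = 1) (x : H) :
    ((ℂ ∙ e)ᗮ.orthogonalProjectionOnto x : H) = x - ⟪e, x⟫_ℂ • e := by
  simp [Submodule.starProjection_unit_singleton ℂ he]

end UnitVector

section Unitary

variable {E : Type*} [NormedAddCommGroup E] [InnerProductSpace ℂ E] {U : E →L[ℂ] E}
  {ρ : ℂ} {a : E}

theorem mul_conj_eq_one_iff_norm_eq_one : ρ * conj ρ = 1 ↔ ‖ρ‖ = 1 := by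
  rw [Complex.mul_conj', ← Complex.ofReal_pow, Complex.ofReal_eq_one,
    pow_eq_one_iff_of_nonneg (norm_nonneg ρ) two_ne_zero]

theorem bijective_of_inner_map_map (hU : ∀ u v, ⟪U u, U v⟫_ℂ = ⟪u, v⟫_ℂ)
    (hsurj : Function.Surjective U) : Function.Bijective U :=
  ⟨(U.toLinearMap.isometryOfInner hU).injective, hsurj⟩

theorem inner_apply_eq_mul_inner_of_apply_eq_smul (hU : ∀ u v, ⟪U u, U v⟫_ℂ = ⟪u, v⟫_ℂ)
    (hρ : ‖ρ‖ = 1) (ha : U a = ρ • a) (w : E) : ⟪a, U w⟫_ℂ = ρ * ⟪a, w⟫_ℂ := by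
  have h := hU a w
  rw [ha, inner_smul_left] at h
  linear_combination ρ * h - ⟪a, U w⟫_ℂ * mul_conj_eq_one_iff_norm_eq_one.2 hρ

theorem inner_eq_mul_inner_iff_exists_real (hU : ∀ u v, ⟪U u, U v⟫_ℂ = ⟪u, v⟫_ℂ)
    (hρ : ‖ρ‖ = 1) (ha : U a = ρ • a) {b c : E} (hc : U c = b) :
    ⟪c, a⟫_ℂ = ρ * ⟪a, b⟫_ℂ ↔ ∃ r : ℝ, ⟪a, b⟫_ℂ = r := by
  have hρ0 : ρ ≠ 0 := by rintro rfl; simp at hρ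
  rw [← hU, hc, ha, inner_smul_right, ← inner_conj_symm, mul_right_inj' hρ0,
    Complex.conj_eq_iff_real]

end Unitary

section ProjPerp

variable {H : Type*} [NormedAddCommGroup H] [InnerProductSpace ℂ H] {e : H}

theorem coe_projPerp (he : ‖e‖ = 1) (x : H) : (projPerp e he x : H) = x - ⟪e, x⟫_ℂ • e := rfl

@[simp]
theorem projPerp_zero (he : ‖e‖ = 1) : projPerp e he 0 = 0 := by
  ext; simp [coe_projPerp]

theorem projPerp_smul_add (he : ‖e‖ = 1) (μ : ℂ) (w : (ℂ ∙ e)ᗮ) :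
    projPerp e he (μ • e + w) = w := by
  ext
  rw [coe_projPerp, inner_smul_add_of_mem_orthogonal he μ w.2, add_sub_cancel_left]

theorem projPerp_coe (he : ‖e‖ = 1) (w : (ℂ ∙ e)ᗮ) : projPerp e he w = w := by
  simpa using projPerp_smul_add he 0 w

theorem projPerp_sub_smul (he : ‖e‖ = 1) (x : H) (μ : ℂ) :
    projPerp e he (x - μ • e) = projPerp e he x := by
  ext
  simp only [coe_projPerp, inner_sub_right, inner_smul_right, inner_self_eq_one_of_norm_eq_one he]
  module

theorem inner_smul_add_projPerp_eq_self (he : ‖e‖ = 1) (x : H) :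
    ⟪e, x⟫_ℂ • e + projPerp e he x = x := by
  rw [coe_projPerp, add_sub_cancel]

theorem comp_comm_iff_forall_smul_add (he : ‖e‖ = 1) {S T : (H × ℂ) →L[ℂ] (H × ℂ)} :
    S ∘L T = T ∘L S ↔
      ∀ (μ : ℂ) (w : (ℂ ∙ e)ᗮ) (z : ℂ), S (T (μ • e + w, z)) = T (S (μ • e + w, z)) := by
  refine ⟨fun h μ w z => congrArg (· (μ • e + w, z)) h, fun h => ?_⟩
  refine ContinuousLinearMap.ext fun ⟨x, z⟩ => ?_
  simpa [inner_smul_add_projPerp_eq_self] using h ⟪e, x⟫_ℂ (projPerp e he x) z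

end ProjPerp

namespace IsHeisenberg

variable {H : Type*} [NormedAddCommGroup H] [InnerProductSpace ℂ H] {e : H}
  {T : (H × ℂ) →L[ℂ] (H × ℂ)} {lam s : ℂ} {a' : H}

theorem mem_orthogonal (hT : IsHeisenberg e T lam a' s) : a' ∈ (ℂ ∙ e)ᗮ := hT.2.1

theorem ne_zero (hT : IsHeisenberg e T lam a' s) : lam ≠ 0 := by
  rintro rfl; simpa using hT.1

theorem apply_smul_add (he : ‖e‖ = 1) (hT : IsHeisenberg e T lam a' s) (μ : ℂ)
    (w : (ℂ ∙ e)ᗮ) (z : ℂ) :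
    T (μ • e + w, z) =
      lam • ((μ + ⟪a', w⟫_ℂ + s * z) • e + ↑(w + z • ⟨a', hT.mem_orthogonal⟩), z) := by
  rw [hT.2.2.2.2.2, ← coe_projPerp he, projPerp_smul_add,
    inner_smul_add_of_mem_orthogonal he μ w.2]
  simp [add_assoc]

theorem sub_smul_one_sq_apply (he : ‖e‖ = 1) (hT : IsHeisenberg e T lam a' s) (v : H × ℂ) :
    ((T - lam • (1 : (H × ℂ) →L[ℂ] (H × ℂ))) ^ 2) v =
      (lam ^ 2 * v.2 * ‖a'‖ ^ 2 : ℂ) • (e, 0) := by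
  set a : (ℂ ∙ e)ᗮ := ⟨a', hT.mem_orthogonal⟩
  have hN : ∀ (μ : ℂ) (w : (ℂ ∙ e)ᗮ) (z : ℂ),
      (T - lam • 1) (μ • e + w, z) = ((lam * (⟪a', w⟫_ℂ + s * z)) • e + ↑((lam * z) • a), 0) := by
    intro μ w z
    rw [sub_apply, hT.apply_smul_add he]
    ext <;> simp; module
  obtain ⟨x, z⟩ := v
  rw [pow_two, mul_apply_eq_comp, ← inner_smul_add_projPerp_eq_self he x, hN, hN]
  ext
  · simp [a, inner_self_eq_norm_sq_to_K]
    module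
  · simp

end IsHeisenberg

namespace Ghat

variable {H : Type*} [NormedAddCommGroup H] [InnerProductSpace ℂ H] {e : H}
  {S : (H × ℂ) →L[ℂ] (H × ℂ)} {ρ : ℂ}

theorem hatA_eq_inner_projPerp (he : ‖e‖ = 1) (u v : H × ℂ) :
    hatA e u v = -u.2 * ⟪v.1, e⟫_ℂ - ⟪e, u.1⟫_ℂ * conj v.2 +
      ⟪projPerp e he v.1, projPerp e he u.1⟫_ℂ := rfl

theorem mul_conj_snd_apply_zero_one (he : ‖e‖ = 1)
    (hS : ∀ u v, hatA e (S u) (S v) = hatA e u v) (hSe : S (e, 0) = ρ • (e, 0)) :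
    ρ * conj (S (0, 1)).2 = 1 := by
  have h := hS (e, 0) (0, 1)
  rw [hSe] at h
  simp [hatA, he] at h
  linear_combination h

theorem snd_apply_zero_one_eq (he : ‖e‖ = 1) (hS : ∀ u v, hatA e (S u) (S v) = hatA e u v)
    (hρ : ‖ρ‖ = 1) (hSe : S (e, 0) = ρ • (e, 0)) : (S (0, 1)).2 = ρ := by
  have hρ0 : ρ ≠ 0 := by rintro rfl; simp at hρ
  have h := (mul_conj_snd_apply_zero_one he hS hSe).trans
    (mul_conj_eq_one_iff_norm_eq_one.2 hρ).symm
  simpa using congrArg conj (mul_left_cancel₀ hρ0 h)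

theorem snd_apply_inl_eq_zero (he : ‖e‖ = 1)
    (hS : ∀ u v, hatA e (S u) (S v) = hatA e u v) (hρ : ρ ≠ 0) (hSe : S (e, 0) = ρ • (e, 0))
    (x : H) : (S (x, 0)).2 = 0 := by
  have h := hS (x, 0) (e, 0)
  rw [hSe] at h
  simp [hatA, he] at h
  tauto

theorem apply_eq_fst_apply_inl_add (he : ‖e‖ = 1)
    (hS : ∀ u v, hatA e (S u) (S v) = hatA e u v) (hρ : ρ ≠ 0) (hSe : S (e, 0) = ρ • (e, 0))
    (x : H) (z : ℂ) : S (x, z) = ((S (x, 0)).1 + z • (S (0, 1)).1, z * (S (0, 1)).2) := by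
  have hxz : ((x, z) : H × ℂ) = (x, 0) + z • (0, 1) := by ext <;> simp
  rw [hxz, map_add, map_smul]
  ext <;> simp [snd_apply_inl_eq_zero he hS hρ hSe]

theorem inner_projPerp_fst_apply_inl (he : ‖e‖ = 1)
    (hS : ∀ u v, hatA e (S u) (S v) = hatA e u v) (hρ : ρ ≠ 0) (hSe : S (e, 0) = ρ • (e, 0))
    (x y : H) :
    ⟪projPerp e he (S (x, 0)).1, projPerp e he (S (y, 0)).1⟫_ℂ =
      ⟪projPerp e he x, projPerp e he y⟫_ℂ := by
  have h := hS (y, 0) (x, 0)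
  simpa [hatA_eq_inner_projPerp he, snd_apply_inl_eq_zero he hS hρ hSe] using h

theorem inner_fst_apply_inl_mul_conj (he : ‖e‖ = 1)
    (hS : ∀ u v, hatA e (S u) (S v) = hatA e u v) (hρ : ρ ≠ 0) (hSe : S (e, 0) = ρ • (e, 0))
    (x : H) :
    ⟪e, (S (x, 0)).1⟫_ℂ * conj (S (0, 1)).2 =
      ⟪e, x⟫_ℂ + ⟪projPerp e he (S (0, 1)).1, projPerp e he (S (x, 0)).1⟫_ℂ := by
  have h := hS (x, 0) (0, 1)
  simp [hatA_eq_inner_projPerp he, snd_apply_inl_eq_zero he hS hρ hSe] at h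
  rw [Submodule.coe_inner]
  linear_combination -h

theorem norm_projPerp_fst_apply_zero_one_sq (he : ‖e‖ = 1)
    (hS : ∀ u v, hatA e (S u) (S v) = hatA e u v) :
    ‖(projPerp e he (S (0, 1)).1 : H)‖ ^ 2 =
      2 * (conj (S (0, 1)).2 * ⟪e, (S (0, 1)).1⟫_ℂ).re := by
  have h := hS (0, 1) (0, 1)
  rw [hatA_eq_inner_projPerp he, hatA_eq_inner_projPerp he, Submodule.coe_inner,
    inner_self_eq_norm_sq_to_K] at h
  simp only [inner_zero_left, inner_zero_right, mul_zero, sub_zero, map_one, mul_one, zero_add,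
    projPerp_zero, ← inner_conj_symm (S (0, 1)).1 e] at h
  have hre := Complex.add_conj (conj (S (0, 1)).2 * ⟪e, (S (0, 1)).1⟫_ℂ)
  rw [map_mul, Complex.conj_conj] at hre
  apply Complex.ofReal_injective
  push_cast at hre ⊢
  linear_combination h + hre

noncomputable def perpCompression (e : H) (S : (H × ℂ) →L[ℂ] (H × ℂ)) :
    (ℂ ∙ e)ᗮ →L[ℂ] (ℂ ∙ e)ᗮ :=
  (ℂ ∙ e)ᗮ.orthogonalProjectionOnto ∘L ContinuousLinearMap.fst ℂ H ℂ ∘L S ∘L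
    ContinuousLinearMap.inl ℂ H ℂ ∘L (ℂ ∙ e)ᗮ.subtypeL

theorem perpCompression_apply (he : ‖e‖ = 1) (w : (ℂ ∙ e)ᗮ) :
    perpCompression e S w = projPerp e he (S (w, 0)).1 := by
  ext
  simp [perpCompression, coe_orthogonalProjectionOnto_orthogonal_singleton he, coe_projPerp]

theorem perpCompression_projPerp (he : ‖e‖ = 1) (hSe : S (e, 0) = ρ • (e, 0)) (x : H) :
    perpCompression e S (projPerp e he x) = projPerp e he (S (x, 0)).1 := by
  have hx : ((projPerp e he x : H), (0 : ℂ)) = (x, 0) - ⟪e, x⟫_ℂ • (e, 0) := by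
    ext <;> simp [coe_projPerp]
  rw [perpCompression_apply he, hx, map_sub, map_smul, hSe, smul_smul]
  exact projPerp_sub_smul he _ _

theorem inner_perpCompression (he : ‖e‖ = 1)
    (hS : ∀ u v, hatA e (S u) (S v) = hatA e u v) (hρ : ρ ≠ 0) (hSe : S (e, 0) = ρ • (e, 0))
    (u v : (ℂ ∙ e)ᗮ) : ⟪perpCompression e S u, perpCompression e S v⟫_ℂ = ⟪u, v⟫_ℂ := by
  rw [← projPerp_coe he u, ← projPerp_coe he v, perpCompression_projPerp he hSe,
    perpCompression_projPerp he hSe]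
  exact inner_projPerp_fst_apply_inl he hS hρ hSe _ _

theorem perpCompression_surjective (he : ‖e‖ = 1) (hS : memGhat e S) (hρ : ρ ≠ 0)
    (hSe : S (e, 0) = ρ • (e, 0)) : Function.Surjective (perpCompression e S) := by
  intro w
  obtain ⟨⟨x, z⟩, hxz⟩ := hS.1.2 ((w : H), 0)
  have hσ : (S (0, 1)).2 ≠ 0 := by
    intro h
    simpa [h] using mul_conj_snd_apply_zero_one he hS.2 hSe
  have hz : z = 0 := by
    have h := congrArg Prod.snd hxz
    rw [apply_eq_fst_apply_inl_add he hS.2 hρ hSe] at h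
    exact (mul_eq_zero.1 h).resolve_right hσ
  subst hz
  refine ⟨projPerp e he x, ?_⟩
  rw [perpCompression_projPerp he hSe, hxz, projPerp_coe]

noncomputable def stabilizerMap (e : H) (he : ‖e‖ = 1) (ρ : ℂ)
    (U : (ℂ ∙ e)ᗮ →L[ℂ] (ℂ ∙ e)ᗮ) (b' c' : (ℂ ∙ e)ᗮ) (t : ℂ) (x : H) (z : ℂ) : H × ℂ :=
  ((ρ * ⟪e, x⟫_ℂ + ⟪(c' : H), x - ⟪e, x⟫_ℂ • e⟫_ℂ + ρ * t * z) • e + (U (projPerp e he x) : H)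
    + (ρ * z) • (b' : H), ρ * z)

theorem stabilizerMap_smul_add (he : ‖e‖ = 1) (U : (ℂ ∙ e)ᗮ →L[ℂ] (ℂ ∙ e)ᗮ)
    (b' c' : (ℂ ∙ e)ᗮ) (t μ : ℂ) (w : (ℂ ∙ e)ᗮ) (z : ℂ) :
    stabilizerMap e he ρ U b' c' t (μ • e + w) z =
      ((ρ * μ + ⟪(c' : H), w⟫_ℂ + ρ * t * z) • e + ↑(U w + (ρ * z) • b'), ρ * z) := by
  rw [stabilizerMap, ← coe_projPerp he, projPerp_smul_add,
    inner_smul_add_of_mem_orthogonal he μ w.2]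
  simp [add_assoc]

theorem apply_eq_stabilizerMap (he : ‖e‖ = 1) (hS : ∀ u v, hatA e (S u) (S v) = hatA e u v)
    (hρ : ‖ρ‖ = 1) (hSe : S (e, 0) = ρ • (e, 0)) {c' : (ℂ ∙ e)ᗮ}
    (hc' : perpCompression e S c' = conj ρ • projPerp e he (S (0, 1)).1) (x : H) (z : ℂ) :
    S (x, z) = stabilizerMap e he ρ (perpCompression e S) (conj ρ • projPerp e he (S (0, 1)).1) c'
      (conj ρ * ⟪e, (S (0, 1)).1⟫_ℂ) x z := by
  have hρ1 := mul_conj_eq_one_iff_norm_eq_one.2 hρ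
  have hρ0 : ρ ≠ 0 := by rintro rfl; simp at hρ
  have hσ := snd_apply_zero_one_eq he hS hρ hSe
  have hx := inner_fst_apply_inl_mul_conj he hS hρ0 hSe x
  have hc := inner_perpCompression he hS hρ0 hSe c' (projPerp e he x)
  rw [hσ] at hx
  rw [hc', perpCompression_projPerp he hSe, inner_smul_left, Complex.conj_conj] at hc
  have hey : ⟪e, (S (x, 0)).1⟫_ℂ = ρ * ⟪e, x⟫_ℂ + ⟪c', projPerp e he x⟫_ℂ := by
    linear_combination ρ * hx + hc - ⟪e, (S (x, 0)).1⟫_ℂ * hρ1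
  rw [apply_eq_fst_apply_inl_add he hS hρ0 hSe, hσ, stabilizerMap,
    perpCompression_projPerp he hSe]
  conv_lhs => rw [← inner_smul_add_projPerp_eq_self he (S (x, 0)).1,
    ← inner_smul_add_projPerp_eq_self he (S (0, 1)).1, hey]
  rw [Submodule.coe_inner, coe_projPerp]
  ext
  · simp only [Submodule.coe_smul]
    match_scalars
    · linear_combination (-z * ⟪e, (S (0, 1)).1⟫_ℂ) * hρ1
    · ring
    · linear_combination -z * hρ1
  · ring

theorem exists_stabilizerMap (he : ‖e‖ = 1) (hS : memGhat e S) (hρ : ‖ρ‖ = 1)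
    (hSe : S (e, 0) = ρ • (e, 0)) :
    ∃ (U : (ℂ ∙ e)ᗮ →L[ℂ] (ℂ ∙ e)ᗮ) (b' c' : (ℂ ∙ e)ᗮ) (t : ℂ), Function.Bijective U ∧
      (∀ u v, ⟪U u, U v⟫_ℂ = ⟪u, v⟫_ℂ) ∧ t.re = 1 / 2 * ‖(b' : H)‖ ^ 2 ∧ U c' = b' ∧
      ∀ x z, S (x, z) = stabilizerMap e he ρ U b' c' t x z := by
  have hρ0 : ρ ≠ 0 := by rintro rfl; simp at hρ
  have hU := inner_perpCompression he hS.2 hρ0 hSe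
  have hUsurj := perpCompression_surjective he hS hρ0 hSe
  obtain ⟨c', hc'⟩ := hUsurj (conj ρ • projPerp e he (S (0, 1)).1)
  refine ⟨perpCompression e S, _, c', conj ρ * ⟪e, (S (0, 1)).1⟫_ℂ,
    bijective_of_inner_map_map hU hUsurj, hU, ?_, hc', apply_eq_stabilizerMap he hS.2 hρ hSe hc'⟩
  rw [Submodule.coe_smul, norm_smul, Complex.norm_conj, hρ, one_mul,
    norm_projPerp_fst_apply_zero_one_sq he hS.2, snd_apply_zero_one_eq he hS.2 hρ hSe]
  ring

end Ghat

namespace IsHeisenberg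

open Ghat

variable {H : Type*} [NormedAddCommGroup H] [InnerProductSpace ℂ H] {e : H}
  {S T : (H × ℂ) →L[ℂ] (H × ℂ)} {lam s ρ t : ℂ} {a' : H}
  {U : (ℂ ∙ e)ᗮ →L[ℂ] (ℂ ∙ e)ᗮ} {b' c' : (ℂ ∙ e)ᗮ}

theorem exists_apply_inl_eq_smul_of_comp_comm (he : ‖e‖ = 1) (hT : IsHeisenberg e T lam a' s)
    (ha' : a' ≠ 0) (hS : ∀ u v, hatA e (S u) (S v) = hatA e u v) (hcomm : S ∘L T = T ∘L S) :
    ∃ ρ : ℂ, ‖ρ‖ = 1 ∧ S (e, 0) = ρ • (e, 0) := by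
  have hN : Commute S ((T - lam • 1) ^ 2) := by
    rw [← Algebra.algebraMap_eq_smul_one]
    exact ((show Commute S T from hcomm).sub_right
      (Algebra.commute_algebraMap_right lam S)).pow_right 2
  have h := congrArg (· ((0 : H), (1 : ℂ))) hN.eq
  simp only [mul_apply_eq_comp, hT.sub_smul_one_sq_apply he, map_smul] at h
  have hc : (lam ^ 2 * ‖a'‖ ^ 2 : ℂ) ≠ 0 := by simp [hT.ne_zero, ha']
  have hSe : S (e, 0) = (S (0, 1)).2 • (e, 0) := by
    refine smul_right_injective _ hc ?_
    simp only [smul_smul]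
    convert h using 2 <;> ring
  exact ⟨_, mul_conj_eq_one_iff_norm_eq_one.1 (mul_conj_snd_apply_zero_one he hS hSe), hSe⟩

theorem comp_comm_iff (he : ‖e‖ = 1) (hT : IsHeisenberg e T lam a' s)
    (hSf : ∀ x z, S (x, z) = stabilizerMap e he ρ U b' c' t x z) (hρ : ‖ρ‖ = 1)
    (hU : ∀ u v, ⟪U u, U v⟫_ℂ = ⟪u, v⟫_ℂ) :
    S ∘L T = T ∘L S ↔ U ⟨a', hT.mem_orthogonal⟩ = ρ • ⟨a', hT.mem_orthogonal⟩ ∧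
      ⟪(c' : H), a'⟫_ℂ = ρ * ⟪a', (b' : H)⟫_ℂ := by
  set a : (ℂ ∙ e)ᗮ := ⟨a', hT.mem_orthogonal⟩
  have ha : (a : H) = a' := rfl
  have hST : ∀ μ (w : (ℂ ∙ e)ᗮ) z, S (T (μ • e + w, z)) =
      lam • ((ρ * (μ + ⟪a', w⟫_ℂ + s * z) + ⟪(c' : H), ↑(w + z • a)⟫_ℂ + ρ * t * z) • e +
        ↑(U (w + z • a) + (ρ * z) • b'), ρ * z) := by
    intro μ w z
    rw [hT.apply_smul_add he, map_smul, hSf, stabilizerMap_smul_add he]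
  have hTS : ∀ μ (w : (ℂ ∙ e)ᗮ) z, T (S (μ • e + w, z)) =
      lam • ((ρ * μ + ⟪(c' : H), w⟫_ℂ + ρ * t * z + ⟪a', ↑(U w + (ρ * z) • b')⟫_ℂ +
        s * (ρ * z)) • e + ↑(U w + (ρ * z) • b' + (ρ * z) • a), ρ * z) := by
    intro μ w z
    rw [hSf, stabilizerMap_smul_add he, hT.apply_smul_add he]
  simp only [comp_comm_iff_forall_smul_add he, hST, hTS, smul_right_inj hT.ne_zero,
    Prod.mk.injEq, smul_add_eq_smul_add_iff he, and_true]
  constructor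
  · intro h
    obtain ⟨he1, hU1⟩ := h 0 0 1
    refine ⟨by simpa [add_comm] using hU1, ?_⟩
    simp [a] at he1
    linear_combination he1
  · rintro ⟨hUa, hca⟩ μ w z
    have haU := inner_apply_eq_mul_inner_of_apply_eq_smul hU hρ hUa w
    simp only [Submodule.coe_inner, ha] at haU
    refine ⟨?_, by rw [map_add, map_smul, hUa, smul_smul, mul_comm]; abel⟩
    simp only [Submodule.coe_add, Submodule.coe_smul, inner_add_right, inner_smul_right, ha, haU,
      hca]
    ring

end IsHeisenberg

section

variable {H : Type*} [NormedAddCommGroup H] [InnerProductSpace ℂ H] [CompleteSpace H]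

/-- centralizer of a non-vertical Heisenberg translation
`T̂ = (λ, a', s)`: `Ŝ ∈ Ĝ` commutes with `T̂` iff it has the stated stabilizer form
with `U(a') = λ'·a'` and `⟨b',a'⟩ ∈ ℝ`. -/
theorem centralizer_nonvertical_translation
    (e : H) (he : ‖e‖ = 1) (lam s : ℂ) (a' : H) (ha' : a' ≠ 0)
    (T : (H × ℂ) →L[ℂ] (H × ℂ)) (hT : IsHeisenberg e T lam a' s)
    (S : (H × ℂ) →L[ℂ] (H × ℂ)) (hS : memGhat e S) :
    S ∘L T = T ∘L S ↔
      ∃ (lam' : ℂ) (U : ((ℂ ∙ e)ᗮ : Submodule ℂ H) →L[ℂ] ((ℂ ∙ e)ᗮ : Submodule ℂ H))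
        (b' : ((ℂ ∙ e)ᗮ : Submodule ℂ H)) (c' : ((ℂ ∙ e)ᗮ : Submodule ℂ H)) (t : ℂ),
        ‖lam'‖ = 1 ∧
        -- U is a unitary operator of (ℂ·e)ᗮ
        Function.Bijective U ∧
        (∀ u v : ((ℂ ∙ e)ᗮ : Submodule ℂ H), (inner ℂ (U u) (U v) : ℂ) = inner ℂ u v) ∧
        -- U(a') = λ'·a'
        (∀ ha : a' ∈ (ℂ ∙ e)ᗮ, U ⟨a', ha⟩ = lam' • (⟨a', ha⟩ : ((ℂ ∙ e)ᗮ : Submodule ℂ H))) ∧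
        -- ⟨b',a'⟩ ∈ ℝ
        (∃ r : ℝ, (inner ℂ a' (b' : H) : ℂ) = (r : ℂ)) ∧
        -- Re t = ‖b'‖²/2
        t.re = (1 / 2) * ‖(b' : H)‖ ^ 2 ∧
        -- c' = U⁻¹(b')
        U c' = b' ∧
        -- the stabilizer form of Ŝ
        (∀ (x : H) (z : ℂ),
          S (x, z) =
            (((lam' * (inner ℂ e x : ℂ)
                + (inner ℂ (c' : H) (x - (inner ℂ e x : ℂ) • e) : ℂ)
                + lam' * t * z) • e
              + ((U (projPerp e he x) : H))
              + (lam' * z) • (b' : H), lam' * z) : H × ℂ)) := by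
  constructor
  · intro hcomm
    obtain ⟨ρ, hρ, hSe⟩ := hT.exists_apply_inl_eq_smul_of_comp_comm he ha' hS.2 hcomm
    obtain ⟨U, b', c', t, hUbij, hU, ht, hc', hSf⟩ := Ghat.exists_stabilizerMap he hS hρ hSe
    obtain ⟨hUa, hca⟩ := (hT.comp_comm_iff he hSf hρ hU).1 hcomm
    exact ⟨ρ, U, b', c', t, hρ, hUbij, hU, fun _ => hUa,
      (inner_eq_mul_inner_iff_exists_real hU hρ hUa hc').1 hca, ht, hc', hSf⟩
  · rintro ⟨ρ, U, b', c', t, hρ, -, hU, hUa, hreal, -, hc', hSf⟩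
    have hUa := hUa hT.mem_orthogonal
    exact (hT.comp_comm_iff he hSf hρ hU).2
      ⟨hUa, (inner_eq_mul_inner_iff_exists_real hU hρ hUa hc').2 hreal⟩

end
end

section
/- Let T ∈ G be an operator that is not unitary with respect to the standard inner product of H ⊕ ℂ. Then T is a normal operator if and only if there exist x₀ ∈ H and λ₁, λ₂ ∈ ℂ such that T(x₀,1) = λ₁·(x₀,1) and T(−x₀,1) = λ₂·(−x₀,1); moreover, in this case ‖x₀‖ = 1. -/
/-!
Write `e = (0,1)`, `J = 1 ⊕ (-1)` (so `A(u,v) = ⟨u, Jv⟩`), `g = Te = (b, d)` and `f = T*e`.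
Membership in `G` means `T*JT = J`, and surjectivity upgrades it to `TJT* = J`. As
`J = 1 - 2ee*`, this gives `T*T - TT* = 2(ff* - gg*)`; since `d ≠ 0` (`|d|² = 1 + ‖b‖²`), `T` is
normal iff `d f = conj d g`.

If so, `TJf = -e` shows `Tg = 2d g - (d / conj d) e`: `T` preserves the plane spanned by `e` and
`g`, with eigenvectors `(b, ±s)` for `s² = d² - d / conj d = d‖b‖² / conj d`. Here `b ≠ 0`,
for `b = 0` makes `e` an eigenvector and then `T` is unitary; so `x₀ = b / s` works.

Conversely, eigenvectors `p = (x₀,1)`, `q = (-x₀,1)` of `T` have `A(p,q) ≠ 0`, hence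
`λ₁ conj λ₂ = 1`, and `T*J T = J` makes them eigenvectors of `T*` for `conj λ₁`, `conj λ₂`.
Averaging over `e = (p + q)/2` gives `d f = conj d g`. If `‖x₀‖ ≠ 1`, also `A(p,p) ≠ 0`, so
`|λ₁| = 1`, `λ₂ = λ₁`, `e` is an eigenvector and `T` is unitary.
-/

open scoped ComplexConjugate

theorem apply_add_smul_eq_smul_of_sq_eq {R M F : Type*} [CommRing R] [AddCommGroup M]
    [Module R M] [FunLike F M M] [LinearMapClass F R M M] (f : F) {e g : M} {d κ s : R}
    (he : f e = g) (hg : f g = (2 * d) • g - κ • e) (hs : s ^ 2 = d ^ 2 - κ) :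
    f (g + (s - d) • e) = (d + s) • (g + (s - d) • e) := by
  rw [map_add, map_smul, hg, he]
  linear_combination (norm := module) (-hs) • e

section
variable {H : Type*} [NormedAddCommGroup H] [InnerProductSpace ℂ H]
  {T Tadj : (H × ℂ) →L[ℂ] (H × ℂ)}

theorem ipStd_conj_symm (u v : H × ℂ) : conj (ipStd u v) = ipStd v u := by
  simp only [ipStd, map_add, map_mul, inner_conj_symm, Complex.conj_conj]
  ring

theorem ipStd_smul_right (c : ℂ) (u v : H × ℂ) : ipStd u (c • v) = conj c * ipStd u v := by
  simp only [ipStd, Prod.smul_fst, Prod.smul_snd, inner_smul_left, smul_eq_mul, map_mul]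
  ring

theorem ipStd_zero_one (u : H × ℂ) : ipStd u (0, 1) = u.2 := by
  simp [ipStd]

theorem ipStd_zero_one_left (u : H × ℂ) : ipStd (0, 1) u = conj u.2 := by
  simp [ipStd]

theorem ipStd_eq_formA_add (u v : H × ℂ) : ipStd u v = formA u v + 2 * u.2 * conj v.2 := by
  simp only [ipStd, formA]
  ring

theorem ext_ipStd {v w : H × ℂ} (h : ∀ u, ipStd u v = ipStd u w) : v = w := by
  ext
  · exact ext_inner_right ℂ fun x => by simpa [ipStd] using h (x, 0)
  · simpa [ipStd] using congrArg conj (h (0, 1))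

theorem formA_smul_smul (a c : ℂ) (u v : H × ℂ) :
    formA (a • u) (c • v) = a * conj c * formA u v := by
  simp only [formA, Prod.smul_fst, Prod.smul_snd, inner_smul_left, inner_smul_right,
    smul_eq_mul, map_mul]
  ring

theorem formA_self (v : H × ℂ) : formA v v = (‖v.1‖ : ℂ) ^ 2 - v.2 * conj v.2 := by
  simp [formA, inner_self_eq_norm_sq_to_K]

noncomputable def fundSymm : (H × ℂ) →L[ℂ] (H × ℂ) :=
  (ContinuousLinearMap.fst ℂ H ℂ).prod (-ContinuousLinearMap.snd ℂ H ℂ)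

@[simp]
theorem fundSymm_apply (u : H × ℂ) : fundSymm u = (u.1, -u.2) := rfl

@[simp]
theorem fundSymm_fundSymm (u : H × ℂ) : fundSymm (fundSymm u) = u := by
  simp

theorem eq_fundSymm_add (u : H × ℂ) : u = fundSymm u + (2 * u.2) • (0, 1) := by
  ext <;> simp; ring

theorem formA_eq_ipStd_fundSymm (u v : H × ℂ) : formA u v = ipStd u (fundSymm v) := by
  simp [formA, ipStd, sub_eq_add_neg]

theorem normSq_snd_apply_zero_one (hG : ∀ u v, formA (T u) (T v) = formA u v) :
    (T (0, 1)).2 * conj (T (0, 1)).2 = 1 + (‖(T (0, 1)).1‖ : ℂ) ^ 2 := by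
  have h := hG (0, 1) (0, 1)
  rw [formA_self, formA_self] at h
  simp only [norm_zero, Complex.ofReal_zero, map_one, mul_one] at h
  linear_combination -h

theorem snd_apply_zero_one_ne_zero (hG : ∀ u v, formA (T u) (T v) = formA u v) :
    (T (0, 1)).2 ≠ 0 := by
  intro hd
  have h := normSq_snd_apply_zero_one hG
  rw [hd, zero_mul] at h
  exact (by positivity : (0 : ℝ) < 1 + ‖(T (0, 1)).1‖ ^ 2).ne' (by exact_mod_cast h.symm)

theorem ipStd_apply_apply_of_fst_apply_zero_one_eq_zero
    (hG : ∀ u v, formA (T u) (T v) = formA u v) (hb : (T (0, 1)).1 = 0) (u v : H × ℂ) :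
    ipStd (T u) (T v) = ipStd u v := by
  set d := (T (0, 1)).2
  have hdd : d * conj d = 1 := by simpa [hb] using normSq_snd_apply_zero_one hG
  have hsnd : ∀ w : H × ℂ, (T w).2 = d * w.2 := by
    intro w
    have h := hG w (0, 1)
    rw [show T (0, 1) = (0, d) from Prod.ext hb rfl] at h
    simp only [formA, inner_zero_left, map_one, mul_one, zero_sub, neg_inj] at h
    linear_combination d * h - (T w).2 * hdd
  rw [ipStd_eq_formA_add, ipStd_eq_formA_add, hG, hsnd, hsnd, map_mul]
  linear_combination 2 * u.2 * conj v.2 * hdd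

theorem snd_apply_eq_ipStd_adjoint (hadj : ∀ u v, ipStd (T u) v = ipStd u (Tadj v))
    (u : H × ℂ) : (T u).2 = ipStd u (Tadj (0, 1)) := by
  rw [← ipStd_zero_one, hadj]

theorem snd_adjoint_apply (hadj : ∀ u v, ipStd (T u) v = ipStd u (Tadj v)) (u : H × ℂ) :
    (Tadj u).2 = ipStd u (T (0, 1)) := by
  rw [← ipStd_zero_one, ← ipStd_conj_symm, ← hadj, ipStd_conj_symm]

theorem adjoint_fundSymm_apply (hadj : ∀ u v, ipStd (T u) v = ipStd u (Tadj v))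
    (hG : ∀ u v, formA (T u) (T v) = formA u v) (u : H × ℂ) :
    Tadj (fundSymm (T u)) = fundSymm u :=
  ext_ipStd fun w => by rw [← hadj, ← formA_eq_ipStd_fundSymm, hG, formA_eq_ipStd_fundSymm]

theorem apply_fundSymm_adjoint (hadj : ∀ u v, ipStd (T u) v = ipStd u (Tadj v))
    (hT : memG T) (u : H × ℂ) : T (fundSymm (Tadj u)) = fundSymm u := by
  obtain ⟨w, hw⟩ := hT.1.2 (fundSymm u)
  have hu : u = fundSymm (T w) := by rw [hw, fundSymm_fundSymm]
  rw [hu, adjoint_fundSymm_apply hadj hT.2, fundSymm_fundSymm, fundSymm_fundSymm]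

theorem adjoint_apply_apply (hadj : ∀ u v, ipStd (T u) v = ipStd u (Tadj v))
    (hG : ∀ u v, formA (T u) (T v) = formA u v) (u : H × ℂ) :
    Tadj (T u) = fundSymm u + (2 * ipStd u (Tadj (0, 1))) • Tadj (0, 1) := by
  conv_lhs => rw [eq_fundSymm_add (T u)]
  rw [map_add, map_smul, adjoint_fundSymm_apply hadj hG, snd_apply_eq_ipStd_adjoint hadj]

theorem apply_adjoint_apply (hadj : ∀ u v, ipStd (T u) v = ipStd u (Tadj v))
    (hT : memG T) (u : H × ℂ) :
    T (Tadj u) = fundSymm u + (2 * ipStd u (T (0, 1))) • T (0, 1) := by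
  conv_lhs => rw [eq_fundSymm_add (Tadj u)]
  rw [map_add, map_smul, apply_fundSymm_adjoint hadj hT, snd_adjoint_apply hadj]

theorem adjoint_comp_eq_comp_adjoint_iff (hadj : ∀ u v, ipStd (T u) v = ipStd u (Tadj v))
    (hT : memG T) :
    Tadj ∘L T = T ∘L Tadj ↔ (T (0, 1)).2 • Tadj (0, 1) = conj (T (0, 1)).2 • T (0, 1) := by
  set d := (T (0, 1)).2
  have hd : d ≠ 0 := snd_apply_zero_one_ne_zero hT.2
  constructor
  · intro h
    have h01 := congr($h (0, 1))
    simp only [ContinuousLinearMap.comp_apply] at h01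
    rw [adjoint_apply_apply hadj hT.2, apply_adjoint_apply hadj hT, add_right_inj,
      ipStd_zero_one_left, ipStd_zero_one_left, snd_adjoint_apply hadj,
      ipStd_zero_one_left, Complex.conj_conj, mul_smul, mul_smul] at h01
    exact smul_right_injective _ two_ne_zero h01
  · intro h
    have hf : Tadj (0, 1) = (conj d / d) • T (0, 1) := by
      rw [div_eq_inv_mul, mul_smul, ← h, smul_smul, inv_mul_cancel₀ hd, one_smul]
    refine ContinuousLinearMap.ext fun u => ?_
    simp only [ContinuousLinearMap.comp_apply]
    rw [adjoint_apply_apply hadj hT.2, apply_adjoint_apply hadj hT, hf, ipStd_smul_right,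
      smul_smul]
    congr 2
    have hd' : conj d ≠ 0 := (map_ne_zero _).2 hd
    simp only [map_div₀, Complex.conj_conj]
    field_simp

theorem apply_inv_smul_one_of_apply_eq {b : H} {s c : ℂ} (h : T (b, s) = c • (b, s))
    (hs : s ≠ 0) : T (s⁻¹ • b, 1) = c • (s⁻¹ • b, 1) := by
  have hscale : (s⁻¹ • b, (1 : ℂ)) = s⁻¹ • (b, s) := by simp [hs]
  rw [hscale, map_smul, h, smul_comm]

theorem mul_conj_mul_formA_eq_of_eigen (hG : ∀ u v, formA (T u) (T v) = formA u v)
    {u v : H × ℂ} {a c : ℂ} (hu : T u = a • u) (hv : T v = c • v) :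
    a * conj c * formA u v = formA u v := by
  rw [← formA_smul_smul, ← hu, ← hv, hG]

theorem mul_conj_eq_one_of_eigen (hG : ∀ u v, formA (T u) (T v) = formA u v) {x : H}
    {a c : ℂ} (h₁ : T (x, 1) = a • (x, 1)) (h₂ : T (-x, 1) = c • (-x, 1)) : a * conj c = 1 := by
  have hA : formA ((x, 1) : H × ℂ) (-x, 1) = -(1 + (‖x‖ : ℂ) ^ 2) := by
    simp [formA, inner_self_eq_norm_sq_to_K]
    ring
  have hA0 : -(1 + (‖x‖ : ℂ) ^ 2) ≠ 0 :=
    neg_ne_zero.2 fun h => (by positivity : (0 : ℝ) < 1 + ‖x‖ ^ 2).ne' (by exact_mod_cast h)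
  have h := mul_conj_mul_formA_eq_of_eigen hG h₁ h₂
  rw [hA] at h
  exact (mul_eq_right₀ hA0).1 h

theorem norm_eq_one_of_eigen (hG : ∀ u v, formA (T u) (T v) = formA u v)
    (hnotU : ¬ ∀ u v : H × ℂ, ipStd (T u) (T v) = ipStd u v) {x : H} {a c : ℂ}
    (h₁ : T (x, 1) = a • (x, 1)) (h₂ : T (-x, 1) = c • (-x, 1)) : ‖x‖ = 1 := by
  by_contra hx
  have hA0 : formA ((x, 1) : H × ℂ) (x, 1) ≠ 0 := by
    rw [formA_self]
    simp only [map_one, mul_one, sub_ne_zero]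
    exact_mod_cast (pow_eq_one_iff_of_nonneg (norm_nonneg x) two_ne_zero).not.2 hx
  have haa : a * conj a = 1 := (mul_eq_right₀ hA0).1 (mul_conj_mul_formA_eq_of_eigen hG h₁ h₁)
  have hac : a * conj c = 1 := mul_conj_eq_one_of_eigen hG h₁ h₂
  have hca : c = a := by
    have ha : a ≠ 0 := left_ne_zero_of_mul_eq_one haa
    simpa using congrArg conj (mul_left_cancel₀ ha (hac.trans haa.symm))
  have he : T (0, 1) = a • (0, 1) := by
    have hsum : ((0 : H), (1 : ℂ)) = (2⁻¹ : ℂ) • ((x, 1) + (-x, 1)) := by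
      ext <;> norm_num
    rw [hsum, map_smul, map_add, h₁, h₂, hca, ← smul_add, smul_comm]
  exact hnotU (ipStd_apply_apply_of_fst_apply_zero_one_eq_zero hG (by simp [he]))

theorem exists_ipStd_adjoint [CompleteSpace H] (hT : memG T) :
    ∃ Tadj : (H × ℂ) →L[ℂ] (H × ℂ), ∀ u v, ipStd (T u) v = ipStd u (Tadj v) := by
  let e := ContinuousLinearEquiv.ofBijective T (LinearMap.ker_eq_bot.mpr hT.1.1)
    (LinearMap.range_eq_top.mpr hT.1.2)
  refine ⟨fundSymm ∘L (e.symm : (H × ℂ) →L[ℂ] (H × ℂ)) ∘L fundSymm, fun u v => ?_⟩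
  calc ipStd (T u) v = formA (T u) (fundSymm v) := by
        rw [formA_eq_ipStd_fundSymm, fundSymm_fundSymm]
    _ = formA (T u) (T (e.symm (fundSymm v))) := by
        rw [ContinuousLinearEquiv.ofBijective_apply_symm_apply]
    _ = formA u (e.symm (fundSymm v)) := hT.2 _ _
    _ = _ := formA_eq_ipStd_fundSymm _ _

theorem smul_adjoint_apply_fundSymm_of_eigen (hadj : ∀ u v, ipStd (T u) v = ipStd u (Tadj v))
    (hG : ∀ u v, formA (T u) (T v) = formA u v) {v : H × ℂ} {c : ℂ} (hv : T v = c • v) :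
    c • Tadj (fundSymm v) = fundSymm v := by
  rw [← map_smul, ← map_smul, ← hv, adjoint_fundSymm_apply hadj hG]

theorem smul_adjoint_eq_of_eigen (hadj : ∀ u v, ipStd (T u) v = ipStd u (Tadj v))
    (hG : ∀ u v, formA (T u) (T v) = formA u v) {x : H} {a c : ℂ}
    (h₁ : T (x, 1) = a • (x, 1)) (h₂ : T (-x, 1) = c • (-x, 1)) :
    (T (0, 1)).2 • Tadj (0, 1) = conj (T (0, 1)).2 • T (0, 1) := by
  have hac : a * conj c = 1 := mul_conj_eq_one_of_eigen hG h₁ h₂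
  have hca : conj a * c = 1 := by simpa [mul_comm] using congrArg conj hac
  have hJ₁ : fundSymm ((x, 1) : H × ℂ) = -(-x, 1) := by simp
  have hJ₂ : fundSymm ((-x, 1) : H × ℂ) = -(x, 1) := by simp
  have hadj₁ : Tadj (x, 1) = conj a • (x, 1) := by
    have h := smul_adjoint_apply_fundSymm_of_eigen hadj hG h₂
    rw [hJ₂, map_neg, smul_neg, neg_inj] at h
    calc Tadj (x, 1) = (conj a * c) • Tadj (x, 1) := by rw [hca, one_smul]
      _ = conj a • (x, 1) := by rw [mul_smul, h]
  have hadj₂ : Tadj (-x, 1) = conj c • (-x, 1) := by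
    have h := smul_adjoint_apply_fundSymm_of_eigen hadj hG h₁
    rw [hJ₁, map_neg, smul_neg, neg_inj] at h
    calc Tadj (-x, 1) = (conj c * a) • Tadj (-x, 1) := by rw [mul_comm, hac, one_smul]
      _ = conj c • (-x, 1) := by rw [mul_smul, h]
  have hsum : ((0 : H), (1 : ℂ)) = (2⁻¹ : ℂ) • ((x, 1) + (-x, 1)) := by
    ext <;> norm_num
  have hd : (T (0, 1)).2 = 2⁻¹ * (a + c) := by
    rw [hsum, map_smul, map_add, h₁, h₂]
    simp [mul_add]
  rw [hd, hsum, map_smul, map_smul, map_add, map_add, h₁, h₂, hadj₁, hadj₂]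
  simp only [map_mul, map_add, map_inv₀, map_ofNat]
  match_scalars
  · linear_combination (4⁻¹ : ℂ) * (hca - hac)
  · linear_combination (4⁻¹ : ℂ) * (hac - hca)

theorem apply_apply_zero_one_of_smul_adjoint_eq
    (hadj : ∀ u v, ipStd (T u) v = ipStd u (Tadj v)) (hT : memG T)
    (h : (T (0, 1)).2 • Tadj (0, 1) = conj (T (0, 1)).2 • T (0, 1)) :
    T (T (0, 1)) = (2 * (T (0, 1)).2) • T (0, 1)
      - ((T (0, 1)).2 / conj (T (0, 1)).2) • (0, 1) := by
  set d := (T (0, 1)).2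
  have hd' : conj d ≠ 0 := (map_ne_zero _).2 (snd_apply_zero_one_ne_zero hT.2)
  have hf : T (Tadj (0, 1)) = (2 * conj d) • T (0, 1) - (0, 1) := by
    conv_lhs => rw [eq_fundSymm_add (Tadj (0, 1))]
    rw [map_add, map_smul, apply_fundSymm_adjoint hadj hT, snd_adjoint_apply hadj,
      ipStd_zero_one_left, add_comm, sub_eq_add_neg]
    congr 1
    ext <;> simp
  have hg : conj d • T (T (0, 1)) = d • T (Tadj (0, 1)) := by
    rw [← map_smul, ← h, map_smul]
  rw [← smul_right_inj hd', hg, hf]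
  match_scalars
  · ring
  · field_simp

theorem exists_eigen_of_smul_adjoint_eq
    (hadj : ∀ u v, ipStd (T u) v = ipStd u (Tadj v)) (hT : memG T)
    (hnotU : ¬ ∀ u v : H × ℂ, ipStd (T u) (T v) = ipStd u v)
    (h : (T (0, 1)).2 • Tadj (0, 1) = conj (T (0, 1)).2 • T (0, 1)) :
    ∃ (x₀ : H) (lam₁ lam₂ : ℂ),
      T (x₀, 1) = lam₁ • ((x₀, 1) : H × ℂ) ∧ T (-x₀, 1) = lam₂ • ((-x₀, 1) : H × ℂ) := by
  set b := (T (0, 1)).1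
  set d := (T (0, 1)).2
  have hb : b ≠ 0 := fun hb => hnotU (ipStd_apply_apply_of_fst_apply_zero_one_eq_zero hT.2 hb)
  have hd' : conj d ≠ 0 := (map_ne_zero _).2 (snd_apply_zero_one_ne_zero hT.2)
  have heigen : ∀ t : ℂ, t ^ 2 = d ^ 2 - d / conj d → T (b, t) = (d + t) • (b, t) := by
    intro t ht
    have hbt : ((b, t) : H × ℂ) = T (0, 1) + (t - d) • (0, 1) := by
      ext <;> simp [b, d]
    rw [hbt]
    exact apply_add_smul_eq_smul_of_sq_eq T rfl
      (apply_apply_zero_one_of_smul_adjoint_eq hadj hT h) ht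
  obtain ⟨s, hs⟩ := IsAlgClosed.exists_pow_nat_eq (d ^ 2 - d / conj d) two_pos
  have hs0 : s ≠ 0 := by
    rintro rfl
    have hdd := normSq_snd_apply_zero_one hT.2
    have hb' : (‖b‖ : ℂ) ^ 2 ≠ 0 := by exact_mod_cast pow_ne_zero 2 (norm_ne_zero_iff.2 hb)
    refine mul_ne_zero (snd_apply_zero_one_ne_zero hT.2) hb' ?_
    field_simp at hs
    linear_combination (-hs) - d * hdd
  refine ⟨s⁻¹ • b, d + s, d - s, apply_inv_smul_one_of_apply_eq (heigen s hs) hs0, ?_⟩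
  have h₂ :=
    apply_inv_smul_one_of_apply_eq (heigen (-s) (by rw [neg_sq, hs])) (neg_ne_zero.2 hs0)
  rwa [inv_neg, neg_smul, ← sub_eq_add_neg] at h₂

end

section
variable {H : Type*} [NormedAddCommGroup H] [InnerProductSpace ℂ H] [CompleteSpace H]

/-- a non-unitary `T ∈ G` is normal (w.r.t. the standard Hilbert
structure of `H ⊕ ℂ`) iff it has eigenvectors `(x₀,1)` and `(-x₀,1)`; moreover any
such `x₀` has norm one. -/
theorem nonunitary_normal_iff (T : (H × ℂ) →L[ℂ] (H × ℂ)) (hT : memG T)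
    (hnotU : ¬ ∀ u v : H × ℂ, ipStd (T u) (T v) = ipStd u v) :
    ((∃ Tadj : (H × ℂ) →L[ℂ] (H × ℂ),
        (∀ u v : H × ℂ, ipStd (T u) v = ipStd u (Tadj v)) ∧
        Tadj ∘L T = T ∘L Tadj) ↔
      (∃ (x₀ : H) (lam₁ lam₂ : ℂ),
        T (x₀, 1) = lam₁ • ((x₀, 1) : H × ℂ) ∧
        T (-x₀, 1) = lam₂ • ((-x₀, 1) : H × ℂ))) ∧
    (∀ (x₀ : H) (lam₁ lam₂ : ℂ),
      T (x₀, 1) = lam₁ • ((x₀, 1) : H × ℂ) →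
      T (-x₀, 1) = lam₂ • ((-x₀, 1) : H × ℂ) → ‖x₀‖ = 1) := by
  refine ⟨⟨?_, ?_⟩, fun x₀ _ _ h₁ h₂ => norm_eq_one_of_eigen hT.2 hnotU h₁ h₂⟩
  · rintro ⟨Tadj, hadj, hnormal⟩
    exact exists_eigen_of_smul_adjoint_eq hadj hT hnotU
      ((adjoint_comp_eq_comp_adjoint_iff hadj hT).1 hnormal)
  · rintro ⟨x₀, lam₁, lam₂, h₁, h₂⟩
    obtain ⟨Tadj, hadj⟩ := exists_ipStd_adjoint hT
    exact ⟨Tadj, hadj, (adjoint_comp_eq_comp_adjoint_iff hadj hT).2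
      (smul_adjoint_eq_of_eigen hadj hT.2 h₁ h₂)⟩

end
end
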